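/- arXiv:1804.00080 — 12 statements merged into one kernel-verified Lean document; each statement's English description precedes it below -/
import Mathlib

section
/- Let α be a positive transcendental real number and let β be a positive real number. Then there exists an additive subgroup G of ℝ² which contains (1,1), is dense in ℝ², and satisfies I(G) = { [[α^n,0],[0,β^n]] : n ∈ ℤ }. -/
/-- For an additive subgroup `G` of `ℝ²` (elements viewed as row vectors), `IG G` is the
set of invertible real `2 × 2` matrices `B` of the form `[[a,0],[0,b]]` or `[[0,a],[b,0]]`
with `a > 0`, `b > 0`, such that right multiplication by `B` maps `G` onto `G`. -/
def IG (G : AddSubgroup (Fin 2 → ℝ)) : Set (Matrix (Fin 2) (Fin 2) ℝ) :=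
  {B | IsUnit B ∧
    (∃ a b : ℝ, 0 < a ∧ 0 < b ∧
      (B = Matrix.of ![![a, 0], ![0, b]] ∨ B = Matrix.of ![![0, a], ![b, 0]])) ∧
    (fun v => Matrix.vecMul v B) '' (G : Set (Fin 2 → ℝ)) = (G : Set (Fin 2 → ℝ))}

/-!
Choose `θ` transcendental over the countable rings `ℤ[α, α⁻¹]` and `ℤ[β, β⁻¹]` and let `G` be the
set of vectors `(P(α) + θ Q(α), P(β) + θ² R(β))` with `P, Q, R` integer Laurent polynomials.
Since `(θ, 0)`, `(θα, 0)`, `(1, 1)` and `(0, θ²)` lie in `G` and `α`, `θ²` are irrational, `G` is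
dense; multiplying `P, Q, R` by `T ^ n` shows that `diag(αⁿ, βⁿ)` preserves `G`.
Conversely, if `diag(a, b)` preserves `G` then `(a, b)` and `(a⁻¹, b⁻¹)` lie in `G`. Comparing powers
of `θ` in `a a⁻¹ = 1` and `b b⁻¹ = 1` kills the `θ`-parts and makes `P` a unit of `ℤ[T, T⁻¹]`,
that is `± T ^ n`, so `(a, b) = (αⁿ, βⁿ)`. An antidiagonal matrix would put both `a` and `θ a`
into `ℤ[β, β⁻¹] + θ² ℤ[β, β⁻¹]`, which forces `a = 0`.
-/

open scoped LaurentPolynomial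

instance : Countable ℤ[T;T⁻¹] := AddMonoidAlgebra.coeff_injective.countable

lemma exists_transcendental_of_countable {A B : Subring ℝ} (hA : (A : Set ℝ).Countable)
    (hB : (B : Set ℝ).Countable) : ∃ θ : ℝ, Transcendental A θ ∧ Transcendental B θ := by
  have := hA.to_subtype
  have := hB.to_subtype
  have hcount := (Algebraic.countable A ℝ).union (Algebraic.countable B ℝ)
  obtain ⟨θ, hθ⟩ := (hcount.dense_compl ℝ).nonempty
  exact ⟨θ, fun h => hθ (Or.inl h), fun h => hθ (Or.inr h)⟩

lemma Transcendental.rat_of_subring {K : Type*} [Field K] [CharZero K] {A : Subring K} {x : K}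
    (hx : Transcendental A x) : Transcendental ℚ x := fun h =>
  hx (((IsFractionRing.isAlgebraic_iff ℤ ℚ K).2 h).extendScalars
    fun m n hmn => by exact_mod_cast congrArg Subtype.val hmn)

namespace LaurentPolynomial

open Polynomial

lemma exists_eq_C_mul_T_of_isUnit {R : Type*} [CommRing R] [IsDomain R] {f : R[T;T⁻¹]}
    (hf : IsUnit f) : ∃ (u : Rˣ) (n : ℤ), f = C (u : R) * T n := by
  obtain ⟨g, hfg⟩ := hf.exists_right_inv
  obtain ⟨m, p, hp⟩ := exists_T_pow f
  obtain ⟨k, q, hq⟩ := exists_T_pow g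
  have hpq : p * q = X ^ (m + k) := by
    apply toLaurent_injective
    rw [map_mul, hp, hq, toLaurent_X_pow, Nat.cast_add, T_add, mul_mul_mul_comm, hfg, one_mul]
  obtain ⟨s, -, c, hc⟩ := (dvd_prime_pow prime_X _).1 ⟨q, hpq.symm⟩
  obtain ⟨r, hr, hrc⟩ := Polynomial.isUnit_iff.1 c.isUnit
  have hfs : f * T m * C r = T s := by
    rw [← hp, ← toLaurent_C, ← map_mul, hrc, hc, toLaurent_X_pow]
  have hC : C r * C (↑hr.unit⁻¹ : R) = 1 := by rw [← map_mul, hr.mul_val_inv, map_one]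
  have hT : (T m : R[T;T⁻¹]) * T (-m) = 1 := by rw [← T_add, add_neg_cancel, T_zero]
  refine ⟨hr.unit⁻¹, s - m, ?_⟩
  calc f = f * T m * C r * (C ↑hr.unit⁻¹ * T (-m)) := by
        linear_combination (-f * T m * T (-m)) * hC - f * hT
    _ = C ↑hr.unit⁻¹ * T (s - m) := by rw [hfs, T_sub]; ring

lemma eval₂_injective_of_transcendental {R S : Type*} [CommRing R] [CommRing S] [Algebra R S]
    {x : Sˣ} (hx : Transcendental R (x : S)) : Function.Injective (eval₂ (algebraMap R S) x) := by
  refine (injective_iff_map_eq_zero _).2 fun f hf => ?_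
  obtain ⟨n, p, hp⟩ := exists_T_pow f
  have hp0 : aeval (x : S) p = 0 := by
    rw [aeval_def, ← eval₂_toLaurent, hp, map_mul, hf, zero_mul]
  rw [transcendental_iff.1 hx p hp0, map_zero, eq_comm] at hp
  exact (isUnit_T _).mul_left_eq_zero.1 hp

end LaurentPolynomial

section TranscendentalIdentities

open Polynomial

variable {K : Type*} [CommRing K] {A : Subring K} {θ : K}

lemma Transcendental.mul_eq_one_and_eq_zero_of_mul_eq_one [IsDomain K] (hθ : Transcendental A θ)
    {u v u' v' : K} (hu : u ∈ A) (hv : v ∈ A) (hu' : u' ∈ A) (hv' : v' ∈ A)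
    (h : (u + θ * v) * (u' + θ * v') = 1) : u * u' = 1 ∧ v = 0 := by
  set p : A[X] := C ⟨u, hu⟩ + C ⟨v, hv⟩ * X
  set q : A[X] := C ⟨u', hu'⟩ + C ⟨v', hv'⟩ * X
  have hpq : p * q = 1 := transcendental_iff_injective.1 hθ <| by
    simp only [p, q, map_mul, map_add, aeval_C, aeval_X, map_one]
    show (u + v * θ) * (u' + v' * θ) = 1
    linear_combination h
  have hp : p.natDegree = 0 := natDegree_eq_zero_of_isUnit (.of_mul_eq_one q hpq)
  constructor
  · simpa [p, q, mul_coeff_zero] using congrArg (fun r => (r.coeff 0 : K)) hpq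
  · simpa [p] using coeff_eq_zero_of_natDegree_lt (p := p) (n := 1) (by omega)

lemma Transcendental.eq_zero_of_mul_add_mul_sq_eq (hθ : Transcendental A θ) {u w u' w' : K}
    (hu : u ∈ A) (hw : w ∈ A) (hu' : u' ∈ A) (hw' : w' ∈ A)
    (h : θ * (u + θ ^ 2 * w) = u' + θ ^ 2 * w') : u = 0 ∧ w = 0 := by
  have hpq : X * (C ⟨u, hu⟩ + C ⟨w, hw⟩ * X ^ 2) = (C ⟨u', hu'⟩ + C ⟨w', hw'⟩ * X ^ 2 : A[X]) :=
    transcendental_iff_injective.1 hθ <| by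
      simp only [map_mul, map_add, map_pow, aeval_C, aeval_X]
      show θ * (u + w * θ ^ 2) = u' + w' * θ ^ 2
      linear_combination h
  constructor
  · simpa [coeff_X_mul] using congrArg (coeff · 1) hpq
  · simpa [coeff_X_mul] using congrArg (coeff · 3) hpq

end TranscendentalIdentities

lemma AddSubgroup.dense_of_dense_axis_of_dense_snd {G : AddSubgroup (Fin 2 → ℝ)} {S₀ S₁ : Set ℝ}
    (h₀ : Dense S₀) (hS₀ : ∀ x ∈ S₀, ![x, 0] ∈ G) (h₁ : Dense S₁)
    (hS₁ : ∀ y ∈ S₁, ∃ v ∈ G, v 1 = y) : Dense (G : Set (Fin 2 → ℝ)) := by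
  refine Metric.dense_iff.2 fun v r hr => ?_
  obtain ⟨y, hy, hyv⟩ := h₁.exists_dist_lt (v 1) hr
  obtain ⟨w, hw, rfl⟩ := hS₁ y hy
  obtain ⟨x, hx, hxv⟩ := h₀.exists_dist_lt (v 0 - w 0) hr
  refine ⟨w + ![x, 0], ?_, G.add_mem hw (hS₀ x hx)⟩
  rw [Metric.mem_ball, dist_pi_lt_iff hr, Fin.forall_fin_two]
  simp only [Real.dist_eq] at hxv hyv ⊢
  constructor
  · simpa [abs_sub_comm, sub_sub] using hxv
  · simpa [abs_sub_comm] using hyv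

section CouplingGroup

open Matrix LaurentPolynomial

variable (α β : ℝˣ) (θ : ℝ)

noncomputable def couplingHom : ℤ[T;T⁻¹] × ℤ[T;T⁻¹] × ℤ[T;T⁻¹] →+ (Fin 2 → ℝ) where
  toFun x := ![eval₂ (algebraMap ℤ ℝ) α x.1 + θ * eval₂ (algebraMap ℤ ℝ) α x.2.1,
    eval₂ (algebraMap ℤ ℝ) β x.1 + θ ^ 2 * eval₂ (algebraMap ℤ ℝ) β x.2.2]
  map_zero' := by ext i; fin_cases i <;> simp
  map_add' x y := by ext i; fin_cases i <;> simp [mul_add, add_add_add_comm]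

@[simp] lemma couplingHom_apply_zero (x : ℤ[T;T⁻¹] × ℤ[T;T⁻¹] × ℤ[T;T⁻¹]) :
    couplingHom α β θ x 0 = eval₂ (algebraMap ℤ ℝ) α x.1 + θ * eval₂ (algebraMap ℤ ℝ) α x.2.1 :=
  rfl

@[simp] lemma couplingHom_apply_one (x : ℤ[T;T⁻¹] × ℤ[T;T⁻¹] × ℤ[T;T⁻¹]) :
    couplingHom α β θ x 1 = eval₂ (algebraMap ℤ ℝ) β x.1 + θ ^ 2 * eval₂ (algebraMap ℤ ℝ) β x.2.2 :=
  rfl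

noncomputable def couplingGroup : AddSubgroup (Fin 2 → ℝ) := (couplingHom α β θ).range

lemma one_one_mem_couplingGroup : ![1, 1] ∈ couplingGroup α β θ :=
  ⟨(1, 0, 0), by ext i; fin_cases i <;> simp⟩

lemma theta_zero_mem_couplingGroup : ![θ, 0] ∈ couplingGroup α β θ :=
  ⟨(0, 1, 0), by ext i; fin_cases i <;> simp⟩

lemma dense_couplingGroup (hα : Irrational (α : ℝ)) (hθ : Transcendental ℚ θ) :
    Dense (couplingGroup α β θ : Set (Fin 2 → ℝ)) := by
  have hθ0 : θ ≠ 0 := fun h => hθ (h ▸ isAlgebraic_zero)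
  refine AddSubgroup.dense_of_dense_axis_of_dense_snd
    (S₀ := AddSubgroup.closure {θ * α, θ}) (S₁ := AddSubgroup.closure {θ ^ 2, 1})
    (dense_addSubgroupClosure_pair_iff.2 (by rwa [mul_div_cancel_left₀ _ hθ0])) ?_
    (dense_addSubgroupClosure_pair_iff.2 (by rw [div_one]; exact (hθ.pow two_pos).irrational)) ?_
  · intro x hx
    obtain ⟨m, n, rfl⟩ := AddSubgroup.mem_closure_pair.1 hx
    exact ⟨(0, m • T 1 + n • 1, 0), by ext i; fin_cases i <;> simp [mul_add, mul_comm, mul_assoc]⟩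
  · intro y hy
    obtain ⟨m, n, rfl⟩ := AddSubgroup.mem_closure_pair.1 hy
    exact ⟨_, ⟨(n • 1, 0, m • 1), rfl⟩, by simp [add_comm, mul_comm]⟩

lemma vecMul_diagonal_zpow_mem_couplingGroup (n : ℤ) {v : Fin 2 → ℝ}
    (hv : v ∈ couplingGroup α β θ) :
    v ᵥ* diagonal ![(α : ℝ) ^ n, (β : ℝ) ^ n] ∈ couplingGroup α β θ := by
  obtain ⟨x, rfl⟩ := hv
  exact ⟨(T n * x.1, T n * x.2.1, T n * x.2.2), by
    ext i; fin_cases i <;> simp [vecMul_diagonal, mul_add, mul_left_comm, mul_comm]⟩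

lemma diagonal_zpow_mem_IG (hα : 0 < (α : ℝ)) (hβ : 0 < (β : ℝ)) (n : ℤ) :
    Matrix.of ![![(α : ℝ) ^ n, 0], ![0, (β : ℝ) ^ n]] ∈ IG (couplingGroup α β θ) := by
  rw [← diagonal_vec2]
  refine ⟨?_, ⟨_, _, zpow_pos hα n, zpow_pos hβ n, .inl (diagonal_vec2 _ _)⟩, ?_⟩
  · rw [isUnit_diagonal]
    simpa [Pi.isUnit_iff, Fin.forall_fin_two] using ⟨(zpow_pos hα n).ne', (zpow_pos hβ n).ne'⟩
  · refine (Set.image_subset_iff.2 fun v hv =>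
      vecMul_diagonal_zpow_mem_couplingGroup α β θ n hv).antisymm
      fun v hv => ⟨_, vecMul_diagonal_zpow_mem_couplingGroup α β θ (-n) hv, ?_⟩
    have hinv : (fun i => ![(α : ℝ) ^ (-n), (β : ℝ) ^ (-n)] i * ![(α : ℝ) ^ n, (β : ℝ) ^ n] i) =
        fun _ => 1 := by
      ext i; fin_cases i <;> simp [(zpow_pos hα n).ne', (zpow_pos hβ n).ne']
    dsimp only
    rw [vecMul_vecMul, diagonal_mul_diagonal, hinv, diagonal_one, vecMul_one]

lemma exists_zpow_of_mul_eq_one (hα : 0 < (α : ℝ)) (hαtr : Transcendental ℤ (α : ℝ))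
    (hθα : Transcendental (eval₂ (algebraMap ℤ ℝ) α).range θ)
    (hθβ : Transcendental (eval₂ (algebraMap ℤ ℝ) β).range θ)
    {v w : Fin 2 → ℝ} (hv : v ∈ couplingGroup α β θ) (hw : w ∈ couplingGroup α β θ)
    (h0 : v 0 * w 0 = 1) (h1 : v 1 * w 1 = 1) (hv0 : 0 < v 0) :
    ∃ n : ℤ, v 0 = (α : ℝ) ^ n ∧ v 1 = (β : ℝ) ^ n := by
  obtain ⟨⟨P, Q, R⟩, rfl⟩ := hv
  obtain ⟨⟨P', Q', R'⟩, rfl⟩ := hw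
  simp only [couplingHom_apply_zero, couplingHom_apply_one] at h0 h1 hv0 ⊢
  obtain ⟨hPP', hQ⟩ := hθα.mul_eq_one_and_eq_zero_of_mul_eq_one (RingHom.mem_range_self _ P)
    (RingHom.mem_range_self _ Q) (RingHom.mem_range_self _ P') (RingHom.mem_range_self _ Q') h0
  obtain ⟨-, hR⟩ := (hθβ.pow two_pos).mul_eq_one_and_eq_zero_of_mul_eq_one
    (RingHom.mem_range_self _ P) (RingHom.mem_range_self _ R) (RingHom.mem_range_self _ P')
    (RingHom.mem_range_self _ R') h1
  have hP : IsUnit P := .of_mul_eq_one P' <|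
    eval₂_injective_of_transcendental hαtr (by rw [map_mul, map_one, hPP'])
  simp only [hQ, hR, mul_zero, add_zero] at hv0 ⊢
  obtain ⟨u, n, rfl⟩ := exists_eq_C_mul_T_of_isUnit hP
  rcases Int.units_eq_one_or u with rfl | rfl
  · exact ⟨n, by simp⟩
  · exact ((zpow_pos hα n).not_gt (by simpa using hv0)).elim

lemma snd_eq_zero_of_mem_of_theta_mul_mem
    (hθβ : Transcendental (eval₂ (algebraMap ℤ ℝ) β).range θ)
    {v w : Fin 2 → ℝ} (hv : v ∈ couplingGroup α β θ) (hw : w ∈ couplingGroup α β θ)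
    (hvw : w 1 = θ * v 1) : v 1 = 0 := by
  obtain ⟨⟨P, Q, R⟩, rfl⟩ := hv
  obtain ⟨⟨P', Q', R'⟩, rfl⟩ := hw
  simp only [couplingHom_apply_one] at hvw ⊢
  obtain ⟨hP, hR⟩ := hθβ.eq_zero_of_mul_add_mul_sq_eq (RingHom.mem_range_self _ P)
    (RingHom.mem_range_self _ R) (RingHom.mem_range_self _ P') (RingHom.mem_range_self _ R')
    hvw.symm
  rw [hP, hR, mul_zero, add_zero]

lemma IG_couplingGroup (hα : 0 < (α : ℝ)) (hβ : 0 < (β : ℝ)) (hαtr : Transcendental ℤ (α : ℝ))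
    (hθα : Transcendental (eval₂ (algebraMap ℤ ℝ) α).range θ)
    (hθβ : Transcendental (eval₂ (algebraMap ℤ ℝ) β).range θ) :
    IG (couplingGroup α β θ) =
      {B | ∃ n : ℤ, B = Matrix.of ![![(α : ℝ) ^ n, 0], ![0, (β : ℝ) ^ n]]} := by
  ext B
  refine ⟨fun hB => ?_, fun ⟨n, hn⟩ => hn ▸ diagonal_zpow_mem_IG α β θ hα hβ n⟩
  obtain ⟨-, ⟨a, b, ha, -, hB⟩, himg⟩ := hB
  have hmaps {v} (hv : v ∈ couplingGroup α β θ) : v ᵥ* B ∈ couplingGroup α β θ :=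
    himg.subset (Set.mem_image_of_mem _ hv)
  rcases hB with rfl | rfl
  · have hab : ![a, b] ∈ couplingGroup α β θ := by
      simpa using hmaps (one_one_mem_couplingGroup α β θ)
    obtain ⟨w, hw, hw11⟩ := himg.symm.subset (one_one_mem_couplingGroup α β θ)
    obtain ⟨n, han, hbn⟩ := exists_zpow_of_mul_eq_one α β θ hα hαtr hθα hθβ hab hw
      (by simpa [vecMul, dotProduct, mul_comm] using congrFun hw11 0)
      (by simpa [vecMul, dotProduct, mul_comm] using congrFun hw11 1) ha
    exact ⟨n, by simp_all⟩
  · have hba : ![b, a] ∈ couplingGroup α β θ := by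
      simpa using hmaps (one_one_mem_couplingGroup α β θ)
    have hθa : ![0, θ * a] ∈ couplingGroup α β θ := by
      simpa using hmaps (theta_zero_mem_couplingGroup α β θ)
    exact (ha.ne' (snd_eq_zero_of_mem_of_theta_mul_mem α β θ hθβ hba hθa rfl)).elim

end CouplingGroup

theorem stmt0 (α β : ℝ) (hα : 0 < α) (htr : Transcendental ℚ α) (hβ : 0 < β) :
    ∃ G : AddSubgroup (Fin 2 → ℝ),
      (![1, 1] : Fin 2 → ℝ) ∈ G ∧
      Dense (G : Set (Fin 2 → ℝ)) ∧
      IG G = {B | ∃ n : ℤ, B = Matrix.of ![![α ^ n, 0], ![0, β ^ n]]} := by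
  set a := Units.mk0 α hα.ne'
  set b := Units.mk0 β hβ.ne'
  obtain ⟨θ, hθα, hθβ⟩ := exists_transcendental_of_countable
    (A := (LaurentPolynomial.eval₂ (algebraMap ℤ ℝ) a).range)
    (B := (LaurentPolynomial.eval₂ (algebraMap ℤ ℝ) b).range)
    (by rw [RingHom.coe_range]; exact Set.countable_range _)
    (by rw [RingHom.coe_range]; exact Set.countable_range _)
  exact ⟨couplingGroup a b θ, one_one_mem_couplingGroup a b θ,
    dense_couplingGroup a b θ htr.irrational hθβ.rat_of_subring,
    IG_couplingGroup a b θ hα hβ (htr.restrictScalars (algebraMap ℤ ℚ).injective_int) hθα hθβ⟩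
end

section
/- Let α be a positive transcendental real number and let β be a positive real number that is transcendental over the field ℚ(α) (i.e. β is not algebraic over ℚ(α)). Let G = { (f(α), l₁ + l₂·β) : f ∈ ℤ[t, t⁻¹], l₁, l₂ ∈ ℤ }, i.e. the subgroup of ℝ² whose first coordinates range over the ring ℤ[α, α⁻¹] of integer Laurent polynomial values at α and whose second coordinates range over ℤ + ℤβ. Then I(G) = { [[α^n,0],[0,1]] : n ∈ ℤ }. -/
open Polynomial

section LaurentRing

variable {K : Type*} [Field K]

theorem zpow_mem_closure_pair_inv (α : K) (n : ℤ) :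
    α ^ n ∈ Subring.closure ({α, α⁻¹} : Set K) := by
  have hα : α ∈ Subring.closure ({α, α⁻¹} : Set K) := Subring.subset_closure (by simp)
  have hα_inv : α⁻¹ ∈ Subring.closure ({α, α⁻¹} : Set K) := Subring.subset_closure (by simp)
  rcases n with k | k
  · simpa using pow_mem hα k
  · simpa [zpow_negSucc, ← inv_pow] using pow_mem hα_inv (k + 1)

theorem exists_mul_pow_eq_aeval_of_mem_closure {α x : K} (hα : α ≠ 0)
    (hx : x ∈ Subring.closure ({α, α⁻¹} : Set K)) :
    ∃ (n : ℕ) (p : ℤ[X]), x * α ^ n = aeval α p := by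
  induction hx using Subring.closure_induction with
  | mem x hx =>
    rcases hx with rfl | rfl
    · exact ⟨0, X, by simp⟩
    · exact ⟨1, 1, by simp [inv_mul_cancel₀ hα]⟩
  | zero => exact ⟨0, 0, by simp⟩
  | one => exact ⟨0, 1, by simp⟩
  | add x y _ _ ihx ihy =>
    obtain ⟨n, p, hp⟩ := ihx
    obtain ⟨m, q, hq⟩ := ihy
    refine ⟨n + m, p * X ^ m + q * X ^ n, ?_⟩
    simp only [map_add, map_mul, map_pow, aeval_X, ← hp, ← hq]
    ring
  | neg x _ ihx =>
    obtain ⟨n, p, hp⟩ := ihx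
    exact ⟨n, -p, by simp [← hp]⟩
  | mul x y _ _ ihx ihy =>
    obtain ⟨n, p, hp⟩ := ihx
    obtain ⟨m, q, hq⟩ := ihy
    refine ⟨n + m, p * q, ?_⟩
    rw [map_mul, ← hp, ← hq]
    ring

theorem exists_zpow_eq_of_mem_closure {α a : K} (hα : Transcendental ℤ α) (ha : a ≠ 0)
    (ha_mem : a ∈ Subring.closure ({α, α⁻¹} : Set K))
    (ha_inv_mem : a⁻¹ ∈ Subring.closure ({α, α⁻¹} : Set K)) :
    ∃ n : ℤ, a = α ^ n ∨ a = -α ^ n := by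
  have hα0 : α ≠ 0 := fun h ↦ hα (h ▸ isAlgebraic_zero)
  obtain ⟨j, p, hp⟩ := exists_mul_pow_eq_aeval_of_mem_closure hα0 ha_mem
  obtain ⟨k, q, hq⟩ := exists_mul_pow_eq_aeval_of_mem_closure hα0 ha_inv_mem
  have hpq : p * q = X ^ (j + k) := by
    by_contra hne
    refine hα ⟨p * q - X ^ (j + k), sub_ne_zero.mpr hne, ?_⟩
    rw [map_sub, map_mul, ← hp, ← hq, map_pow, aeval_X, pow_add]
    field_simp
    ring
  obtain ⟨i, -, hassoc⟩ := (dvd_prime_pow prime_X _).mp (Dvd.intro q hpq)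
  obtain ⟨u, hu⟩ := hassoc.symm
  obtain ⟨r, hr, hru⟩ := Polynomial.isUnit_iff.mp u.isUnit
  have hai : a * α ^ j = r * α ^ i := by
    rw [hp, ← hu, ← hru, map_mul, map_pow, aeval_X, aeval_C, mul_comm]
    rfl
  refine ⟨i - j, ?_⟩
  rw [zpow_sub₀ hα0, zpow_natCast, zpow_natCast, eq_div_iff (pow_ne_zero _ hα0),
    ← neg_div, eq_div_iff (pow_ne_zero _ hα0), hai]
  rcases Int.isUnit_iff.mp hr with rfl | rfl <;> simp

theorem closure_pair_inv_le_adjoin (F : Type*) [Field F] [Algebra F K] (α : K) :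
    Subring.closure ({α, α⁻¹} : Set K) ≤
      (IntermediateField.adjoin F ({α} : Set K)).toSubfield.toSubring := by
  have hα := IntermediateField.mem_adjoin_simple_self F α
  exact Subring.closure_le.mpr (Set.insert_subset hα (Set.singleton_subset_iff.mpr
    (IntermediateField.inv_mem _ hα)))

end LaurentRing

theorem exists_intCast_eq_of_mul_mem {β b : ℝ} (hβ : Transcendental ℤ β)
    (hb : ∃ m₁ m₂ : ℤ, b = m₁ + m₂ * β) (hbβ : ∃ k₁ k₂ : ℤ, β * b = k₁ + k₂ * β) :
    ∃ m : ℤ, b = m := by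
  obtain ⟨m₁, m₂, hb⟩ := hb
  obtain ⟨k₁, k₂, hbβ⟩ := hbβ
  set P : ℤ[X] := C m₂ * X ^ 2 + C (m₁ - k₂) * X - C k₁
  have hP : P = 0 := by
    by_contra hne
    refine hβ ⟨P, hne, ?_⟩
    simp only [P, map_sub, map_add, map_mul, map_pow, aeval_X, aeval_C, algebraMap_int_eq,
      Int.coe_castRingHom]
    linear_combination hbβ - β * hb
  have hm₂ : m₂ = 0 := by
    have h2 := congrArg (coeff · 2) hP
    simp only [P, coeff_sub, coeff_add, coeff_C_mul, coeff_X_pow, coeff_X, coeff_C,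
      coeff_zero] at h2
    simpa using h2
  exact ⟨m₁, by simp [hb, hm₂]⟩

section Matrices

variable {R : Type*}

theorem vecMul_diag_fin_two [NonUnitalNonAssocSemiring R] (v : Fin 2 → R) (a b : R) :
    Matrix.vecMul v (Matrix.of ![![a, 0], ![0, b]]) = ![v 0 * a, v 1 * b] := by
  ext i; fin_cases i <;> simp [Matrix.vecMul, dotProduct, Fin.sum_univ_two]

theorem vecMul_antidiag_fin_two [NonUnitalNonAssocSemiring R] (v : Fin 2 → R) (a b : R) :
    Matrix.vecMul v (Matrix.of ![![0, a], ![b, 0]]) = ![v 1 * b, v 0 * a] := by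
  ext i; fin_cases i <;> simp [Matrix.vecMul, dotProduct, Fin.sum_univ_two]

variable [Field R] {A C : Set R}

theorem mul_mem_of_image_diag_eq {a b : R}
    (himg : (fun v ↦ Matrix.vecMul v (Matrix.of ![![a, 0], ![0, b]])) ''
      {v | v 0 ∈ A ∧ v 1 ∈ C} = {v | v 0 ∈ A ∧ v 1 ∈ C})
    ⦃x y : R⦄ (hx : x ∈ A) (hy : y ∈ C) : x * a ∈ A ∧ y * b ∈ C := by
  have : Matrix.vecMul ![x, y] (Matrix.of ![![a, 0], ![0, b]]) ∈ {v | v 0 ∈ A ∧ v 1 ∈ C} :=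
    himg ▸ Set.mem_image_of_mem _ (by simpa using And.intro hx hy)
  simpa [vecMul_diag_fin_two] using this

theorem mul_inv_mem_of_image_diag_eq {a b : R} (ha : a ≠ 0) (hb : b ≠ 0)
    (himg : (fun v ↦ Matrix.vecMul v (Matrix.of ![![a, 0], ![0, b]])) ''
      {v | v 0 ∈ A ∧ v 1 ∈ C} = {v | v 0 ∈ A ∧ v 1 ∈ C})
    ⦃x y : R⦄ (hx : x ∈ A) (hy : y ∈ C) : x * a⁻¹ ∈ A ∧ y * b⁻¹ ∈ C := by
  have : ![x, y] ∈ {v | v 0 ∈ A ∧ v 1 ∈ C} := by simpa using And.intro hx hy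
  rw [← himg] at this
  obtain ⟨v, ⟨hv₀, hv₁⟩, hv⟩ := this
  simp only [vecMul_diag_fin_two] at hv
  have h₀ : v 0 * a = x := by simpa using congrFun hv 0
  have h₁ : v 1 * b = y := by simpa using congrFun hv 1
  exact ⟨(eq_mul_inv_iff_mul_eq₀ ha).mpr h₀ ▸ hv₀, (eq_mul_inv_iff_mul_eq₀ hb).mpr h₁ ▸ hv₁⟩

theorem mul_mem_of_image_antidiag_eq {a b : R}
    (himg : (fun v ↦ Matrix.vecMul v (Matrix.of ![![0, a], ![b, 0]])) ''
      {v | v 0 ∈ A ∧ v 1 ∈ C} = {v | v 0 ∈ A ∧ v 1 ∈ C})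
    ⦃x y : R⦄ (hx : x ∈ A) (hy : y ∈ C) : y * b ∈ A := by
  have : Matrix.vecMul ![x, y] (Matrix.of ![![0, a], ![b, 0]]) ∈ {v | v 0 ∈ A ∧ v 1 ∈ C} :=
    himg ▸ Set.mem_image_of_mem _ (by simpa using And.intro hx hy)
  simpa [vecMul_antidiag_fin_two] using this.1

theorem image_diag_unit_eq (S : Subring R) {u : R} (hu : u ≠ 0) (hu_mem : u ∈ S)
    (hu_inv_mem : u⁻¹ ∈ S) :
    (fun v ↦ Matrix.vecMul v (Matrix.of ![![u, 0], ![0, 1]])) ''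
      {v | v 0 ∈ S ∧ v 1 ∈ C} = {v | v 0 ∈ S ∧ v 1 ∈ C} := by
  ext w
  simp only [Set.mem_image, Set.mem_ofPred_eq, vecMul_diag_fin_two, mul_one]
  constructor
  · rintro ⟨v, ⟨hv₀, hv₁⟩, rfl⟩
    exact ⟨by simpa using mul_mem hv₀ hu_mem, by simpa using hv₁⟩
  · rintro ⟨hw₀, hw₁⟩
    refine ⟨![w 0 * u⁻¹, w 1], ⟨by simpa using mul_mem hw₀ hu_inv_mem, by simpa using hw₁⟩, ?_⟩
    ext i; fin_cases i <;> simp [inv_mul_cancel_right₀ hu]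

end Matrices

section Transcendental

variable {α β : ℝ}

theorem exists_zpow_eq_and_eq_one_of_image_diag_eq (hα : 0 < α) (htrα : Transcendental ℤ α)
    (htrβ : Transcendental ℤ β) {a b : ℝ} (ha : 0 < a) (hb : 0 < b)
    (himg : (fun v ↦ Matrix.vecMul v (Matrix.of ![![a, 0], ![0, b]])) ''
      {v | v 0 ∈ (Subring.closure ({α, α⁻¹} : Set ℝ) : Set ℝ) ∧
        v 1 ∈ {y : ℝ | ∃ l₁ l₂ : ℤ, y = l₁ + l₂ * β}} =
      {v | v 0 ∈ (Subring.closure ({α, α⁻¹} : Set ℝ) : Set ℝ) ∧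
        v 1 ∈ {y : ℝ | ∃ l₁ l₂ : ℤ, y = l₁ + l₂ * β}}) :
    ∃ n : ℤ, a = α ^ n ∧ b = 1 := by
  have h0 : ∃ l₁ l₂ : ℤ, (0 : ℝ) = l₁ + l₂ * β := ⟨0, 0, by simp⟩
  have h1 : ∃ l₁ l₂ : ℤ, (1 : ℝ) = l₁ + l₂ * β := ⟨1, 0, by simp⟩
  have hβ : ∃ l₁ l₂ : ℤ, β = l₁ + l₂ * β := ⟨0, 1, by simp⟩
  have hfwd := mul_mem_of_image_diag_eq himg
  have hbwd := mul_inv_mem_of_image_diag_eq ha.ne' hb.ne' himg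
  obtain ⟨n, han⟩ : ∃ n : ℤ, a = α ^ n := by
    obtain ⟨n, han | han⟩ := exists_zpow_eq_of_mem_closure htrα ha.ne'
      (by simpa using (hfwd (one_mem _) h0).1) (by simpa using (hbwd (one_mem _) h0).1)
    · exact ⟨n, han⟩
    · linarith [zpow_pos hα n]
  refine ⟨n, han, ?_⟩
  obtain ⟨m, hm⟩ := exists_intCast_eq_of_mul_mem htrβ
    (by simpa using (hfwd (zero_mem _) h1).2) (hfwd (zero_mem _) hβ).2
  obtain ⟨k, hk⟩ := exists_intCast_eq_of_mul_mem htrβ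
    (by simpa using (hbwd (zero_mem _) h1).2) (hbwd (zero_mem _) hβ).2
  have hmk : m * k = 1 := by
    exact_mod_cast show (m : ℝ) * k = 1 by rw [← hm, ← hk, mul_inv_cancel₀ hb.ne']
  rw [hm, Int.eq_one_of_mul_eq_one_right (by exact_mod_cast hm ▸ hb.le) hmk, Int.cast_one]

theorem image_antidiag_ne (htrβ : Transcendental (IntermediateField.adjoin ℚ ({α} : Set ℝ)) β)
    {a b : ℝ} (hb : b ≠ 0) :
    (fun v ↦ Matrix.vecMul v (Matrix.of ![![0, a], ![b, 0]])) ''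
      {v | v 0 ∈ (Subring.closure ({α, α⁻¹} : Set ℝ) : Set ℝ) ∧
        v 1 ∈ {y : ℝ | ∃ l₁ l₂ : ℤ, y = l₁ + l₂ * β}} ≠
      {v | v 0 ∈ (Subring.closure ({α, α⁻¹} : Set ℝ) : Set ℝ) ∧
        v 1 ∈ {y : ℝ | ∃ l₁ l₂ : ℤ, y = l₁ + l₂ * β}} := by
  intro himg
  set K := IntermediateField.adjoin ℚ ({α} : Set ℝ)
  have hle := closure_pair_inv_le_adjoin ℚ α
  have hb_mem : 1 * b ∈ K :=
    hle (mul_mem_of_image_antidiag_eq himg (zero_mem _) (y := 1) ⟨1, 0, by simp⟩)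
  have hβb_mem : β * b ∈ K :=
    hle (mul_mem_of_image_antidiag_eq himg (zero_mem _) (y := β) ⟨0, 1, by simp⟩)
  have hβ_mem : β ∈ K := by simpa [hb] using mul_mem hβb_mem (inv_mem hb_mem)
  exact htrβ (isAlgebraic_algebraMap (⟨β, hβ_mem⟩ : K))

end Transcendental

theorem stmt3_general (α β : ℝ) (hα : 0 < α) (htrα : Transcendental ℚ α)
    (htrβ : Transcendental (IntermediateField.adjoin ℚ ({α} : Set ℝ)) β)
    (G : AddSubgroup (Fin 2 → ℝ))
    (hG : (G : Set (Fin 2 → ℝ)) =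
      {v | v 0 ∈ Subring.closure ({α, α⁻¹} : Set ℝ) ∧ ∃ l₁ l₂ : ℤ, v 1 = l₁ + l₂ * β}) :
    IG G = {B | ∃ n : ℤ, B = Matrix.of ![![α ^ n, 0], ![0, 1]]} := by
  have htrℤ {x : ℝ} (h : Transcendental ℚ x) : Transcendental ℤ x :=
    h.restrictScalars (algebraMap ℤ ℚ).injective_int
  ext B
  constructor
  · rintro ⟨-, ⟨a, b, ha, hb, rfl | rfl⟩, himg⟩
    · rw [hG] at himg
      obtain ⟨n, rfl, rfl⟩ := exists_zpow_eq_and_eq_one_of_image_diag_eq hα (htrℤ htrα)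
        (htrℤ (htrβ.restrictScalars (algebraMap ℚ _).injective)) ha hb himg
      exact ⟨n, rfl⟩
    · exact absurd (hG ▸ himg) (image_antidiag_ne htrβ hb.ne')
  · rintro ⟨n, rfl⟩
    have hαn : α ^ n ≠ 0 := zpow_ne_zero n hα.ne'
    refine ⟨?_, ⟨α ^ n, 1, zpow_pos hα n, one_pos, Or.inl rfl⟩, ?_⟩
    · simp [Matrix.isUnit_iff_isUnit_det, Matrix.det_fin_two_of, hαn]
    · rw [hG]
      exact image_diag_unit_eq (C := {y : ℝ | ∃ l₁ l₂ : ℤ, y = l₁ + l₂ * β}) _ hαn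
        (zpow_mem_closure_pair_inv α n) (by simpa using zpow_mem_closure_pair_inv α (-n))

theorem stmt3 (α β : ℝ) (hα : 0 < α) (htrα : Transcendental ℚ α) (hβ : 0 < β)
    (htrβ : Transcendental (IntermediateField.adjoin ℚ ({α} : Set ℝ)) β)
    (G : AddSubgroup (Fin 2 → ℝ))
    (hG : (G : Set (Fin 2 → ℝ)) =
      {v | v 0 ∈ Subring.closure ({α, α⁻¹} : Set ℝ) ∧ ∃ l₁ l₂ : ℤ, v 1 = l₁ + l₂ * β}) :
    IG G = {B | ∃ n : ℤ, B = Matrix.of ![![α ^ n, 0], ![0, 1]]} :=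
  stmt3_general α β hα htrα htrβ G hG
end

section
/- Let a be a positive real algebraic number with a ≠ 1, and let b = p/q where p and q are positive coprime integers, with b ≠ 1 and a ≠ b. Let A be the diagonal matrix [[a,0],[0,b]], and let G be an additive subgroup of ℝ² containing (1,1) that is A-invariant, i.e. {vA : v ∈ G} = G. Then I(G) strictly contains { Aⁿ : n ∈ ℤ }. -/
open Matrix Polynomial

theorem Subring.aeval_mem {R : Type*} [Ring R] {S : Subring R} {x : R} (hx : x ∈ S)
    (g : ℤ[X]) : aeval x g ∈ S := by
  have h := aeval_algHom_apply S.subtype.toIntAlgHom ⟨x, hx⟩ g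
  simp only [RingHom.toIntAlgHom_apply, Subring.coe_subtype] at h
  exact h ▸ Subtype.prop _

theorem Matrix.diagonal_zpow {n K : Type*} [Fintype n] [DecidableEq n] [Field K] {d : n → K}
    (hd : IsUnit d) (k : ℤ) : diagonal d ^ k = diagonal (d ^ k) := by
  obtain ⟨u, rfl⟩ := hd
  have := coe_units_zpow (Units.map (diagonalRingHom n K).toMonoidHom u) k
  rw [← map_zpow] at this
  simp only [Units.coe_map] at this
  rw [← Units.val_zpow_eq_zpow_val]
  exact this.symm

theorem zpow_mem_of_inv_mem {M S : Type*} [DivisionMonoid M] [SetLike S M] [SubmonoidClass S M]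
    {s : S} {x : M} (hx : x ∈ s) (hx' : x⁻¹ ∈ s) (n : ℤ) : x ^ n ∈ s := by
  obtain ⟨k, rfl | rfl⟩ := n.eq_nat_or_neg
  · simpa using pow_mem hx k
  · simpa [inv_pow] using pow_mem hx' k

theorem Matrix.vecMul_diagonal_eq_mul {n R : Type*} [Fintype n] [DecidableEq n] [CommSemiring R]
    (v d : n → R) : v ᵥ* diagonal d = d * v := by
  ext i
  simp [vecMul_diagonal, mul_comm]

namespace AddSubgroup

variable {R : Type*} [Ring R] (G : AddSubgroup R)

def multiplierRing : Subring R where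
  carrier := {r | ∀ v ∈ G, r * v ∈ G}
  mul_mem' {r s} hr hs v hv := by simpa only [mul_assoc] using hr _ (hs v hv)
  one_mem' v hv := by simpa only [one_mul] using hv
  add_mem' {r s} hr hs v hv := by simpa only [add_mul] using G.add_mem (hr v hv) (hs v hv)
  zero_mem' v _ := by simpa only [zero_mul] using G.zero_mem
  neg_mem' {r} hr v hv := by simpa only [neg_mul] using G.neg_mem (hr v hv)

variable {G}

theorem image_mul_eq_iff_mem_units (u : Rˣ) :
    (fun v => (u : R) * v) '' (G : Set R) = G ↔ u ∈ G.multiplierRing.toSubmonoid.units := by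
  rw [Submonoid.mem_units_iff]
  constructor
  · intro h
    refine ⟨fun v hv => h.subset (Set.mem_image_of_mem _ hv), fun v hv => ?_⟩
    obtain ⟨w, hw, rfl⟩ := h.symm.subset hv
    simpa using hw
  · rintro ⟨hu, hu'⟩
    exact (Set.image_subset_iff.2 fun v hv => hu v hv).antisymm
      fun v hv => ⟨_, hu' v hv, by simp⟩

theorem image_vecMul_diagonal_eq_iff {n K : Type*} [Fintype n] [DecidableEq n] [Field K]
    {G : AddSubgroup (n → K)} {d : n → K} (hd : IsUnit d) :
    (fun v => v ᵥ* diagonal d) '' (G : Set (n → K)) = G ↔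
      d ∈ G.multiplierRing ∧ d⁻¹ ∈ G.multiplierRing := by
  obtain ⟨u, rfl⟩ := hd
  simp only [vecMul_diagonal_eq_mul, ← Units.val_inv_eq_inv_val]
  exact image_mul_eq_iff_mem_units u

end AddSubgroup

theorem Int.exists_dvd_pow_mul_pow_sub_one (n : ℤ) {N : ℤ} (hN : N ≠ 0) :
    ∃ e t : ℕ, 0 < t ∧ N ∣ n ^ e * (n ^ t - 1) := by
  have : NeZero N.natAbs := ⟨Int.natAbs_ne_zero.2 hN⟩
  obtain ⟨i, j, hne, hij⟩ :=
    Finite.exists_ne_map_eq_of_infinite fun k : ℕ => ((n ^ k : ℤ) : ZMod N.natAbs)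
  wlog hlt : i < j generalizing i j
  · exact this j i hne.symm hij.symm (by omega)
  refine ⟨i, j - i, by omega, ?_⟩
  rw [mul_sub, ← pow_add, Nat.add_sub_cancel' hlt.le, mul_one, ← Int.natAbs_dvd,
    ← ZMod.intCast_eq_intCast_iff_dvd_sub]
  exact hij

theorem inv_mul_mem_closure_div {K : Type*} [Field K] {p q : ℤ} (hcop : IsCoprime p q)
    (hp : (p : K) ≠ 0) (hq : (q : K) ≠ 0) :
    ((p : K) * q)⁻¹ ∈ Subring.closure {(p : K) / q, ((p : K) / q)⁻¹} := by
  obtain ⟨u, v, huv⟩ := hcop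
  have huv' : (u : K) * p + v * q = 1 := by exact_mod_cast congrArg (Int.cast : ℤ → K) huv
  have hq' : (q : K)⁻¹ = u * ((p : K) / q) + v := by
    field_simp
    linear_combination -huv'
  have hp' : (p : K)⁻¹ = u + v * ((p : K) / q)⁻¹ := by
    field_simp
    linear_combination -huv'
  have hb : (p : K) / q ∈ Subring.closure {(p : K) / q, ((p : K) / q)⁻¹} :=
    Subring.subset_closure (by simp)
  have hb' : ((p : K) / q)⁻¹ ∈ Subring.closure {(p : K) / q, ((p : K) / q)⁻¹} :=
    Subring.subset_closure (by simp)
  rw [mul_inv, hp', hq']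
  exact mul_mem (add_mem (intCast_mem _ u) (mul_mem (intCast_mem _ v) hb'))
    (add_mem (mul_mem (intCast_mem _ u) hb) (intCast_mem _ v))

theorem exists_intCast_pow_sub_one_eq_mul {K : Type*} [Field K] [CharZero K] {R : Subring K}
    {n : ℤ} (hn : (n : K) ≠ 0) (hnR : (n : K)⁻¹ ∈ R) {c : ℚ} (hc : c ≠ 0) :
    ∃ t : ℕ, 0 < t ∧ ∃ x ∈ R, (n : K) ^ t - 1 = c * x := by
  obtain ⟨e, t, ht, u, hu⟩ := Int.exists_dvd_pow_mul_pow_sub_one n (Rat.num_ne_zero.2 hc)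
  refine ⟨t, ht, c.den * u * (n : K)⁻¹ ^ e,
    mul_mem (mul_mem (natCast_mem _ _) (intCast_mem _ _)) (pow_mem hnR _), ?_⟩
  have hu' : (n : K) ^ e * ((n : K) ^ t - 1) = c.num * u := by exact_mod_cast hu
  rw [Rat.cast_def, inv_pow]
  field_simp
  linear_combination hu'

theorem exists_intPolynomial_aeval_eq_zero_aeval_ne_zero {L : Type*} [CommRing L] [IsDomain L]
    [Algebra ℚ L] {x : L} (hx : IsAlgebraic ℚ x) {r : ℚ} (hxr : x ≠ algebraMap ℚ L r) :
    ∃ g : ℤ[X], aeval x g = 0 ∧ aeval r g ≠ 0 := by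
  have hint := hx.isIntegral
  have hr : aeval r (minpoly ℚ x) ≠ 0 := by
    intro h
    have hlin : minpoly ℚ x = X - C r :=
      (minpoly.eq_of_irreducible_of_monic (minpoly.irreducible hint) h
        (minpoly.monic hint)).trans (minpoly.eq_X_sub_C' r)
    have := minpoly.aeval ℚ x
    rw [hlin, map_sub, aeval_X, aeval_C, sub_eq_zero] at this
    exact hxr this
  obtain ⟨m, hm, hmap⟩ := IsLocalization.integerNormalization_spec (nonZeroDivisors ℤ) (minpoly ℚ x)
  refine ⟨IsLocalization.integerNormalization (nonZeroDivisors ℤ) (minpoly ℚ x),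
    IsLocalization.integerNormalization_aeval_eq_zero _ _ (minpoly.aeval ℚ x), ?_⟩
  rw [← aeval_map_algebraMap ℚ, hmap, zsmul_eq_mul, map_mul, map_intCast]
  exact mul_ne_zero (Int.cast_ne_zero.2 (nonZeroDivisors.ne_zero hm)) hr

section Plane

open AddSubgroup

variable {G : AddSubgroup (Fin 2 → ℝ)}

theorem diagonal_mem_IG {d : Fin 2 → ℝ} (h0 : 0 < d 0) (h1 : 0 < d 1)
    (hd : d ∈ G.multiplierRing) (hd' : d⁻¹ ∈ G.multiplierRing) : diagonal d ∈ IG G := by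
  have hunit : IsUnit d := Pi.isUnit_iff.2 (Fin.forall_fin_two.2 ⟨h0.ne'.isUnit, h1.ne'.isUnit⟩)
  refine ⟨isUnit_diagonal.2 hunit, ⟨_, _, h0, h1, Or.inl ?_⟩,
    (image_vecMul_diagonal_eq_iff hunit).2 ⟨hd, hd'⟩⟩
  ext i j
  fin_cases i <;> fin_cases j <;> simp

theorem vecCons_zero_aeval_mem_multiplierRing {a b : ℝ} (h : ![a, b] ∈ G.multiplierRing)
    {g : ℤ[X]} (hg : aeval a g = 0) : ![0, aeval b g] ∈ G.multiplierRing := by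
  have : aeval ![a, b] g = ![0, aeval b g] := by
    rw [aeval_pi_apply]
    ext i
    fin_cases i <;> simp [hg]
  exact this ▸ Subring.aeval_mem h g

theorem vecCons_zero_mul_mem_multiplierRing {a b c r : ℝ} (h : ![a, b] ∈ G.multiplierRing)
    (h' : ![a, b]⁻¹ ∈ G.multiplierRing) (hc : ![0, c] ∈ G.multiplierRing)
    (hr : r ∈ Subring.closure {b, b⁻¹}) : ![0, c * r] ∈ G.multiplierRing := by
  have hcl : Subring.closure {b, b⁻¹} ≤ G.multiplierRing.map (Pi.evalRingHom (fun _ => ℝ) 1) :=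
    Subring.closure_le.2 <| Set.insert_subset ⟨_, h, rfl⟩ <|
      Set.singleton_subset_iff.2 ⟨_, h', by simp⟩
  obtain ⟨w, hw, rfl⟩ := hcl hr
  have : ![0, c * w 1] = ![0, c] * w := by
    ext i
    fin_cases i <;> simp
  exact this ▸ mul_mem hc hw

theorem exists_one_lt_vecCons_one_mem_multiplierRing {a b : ℝ} (h : ![a, b] ∈ G.multiplierRing)
    (h' : ![a, b]⁻¹ ∈ G.multiplierRing) (halg : IsAlgebraic ℚ a) {p q : ℤ} (hp : 0 < p)
    (hq : 0 < q) (hcop : IsCoprime p q) (hb : b = p / q) (hb1 : b ≠ 1) (hab : a ≠ b) :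
    ∃ β : ℝ, 1 < β ∧ ![1, β] ∈ G.multiplierRing ∧ ![1, β]⁻¹ ∈ G.multiplierRing := by
  have hpq : (1 : ℝ) < p * q := by
    have : p * q ≠ 1 := fun h1 => hb1 <| by
      simp [hb, Int.eq_one_of_mul_eq_one_right hp.le h1, Int.eq_one_of_mul_eq_one_left hq.le h1]
    have := mul_pos hp hq
    exact_mod_cast (show 1 < p * q by omega)
  obtain ⟨g, hga, hgb⟩ := exists_intPolynomial_aeval_eq_zero_aeval_ne_zero halg
    (r := p / q) (by rwa [map_div₀, map_intCast, map_intCast, ← hb])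
  set c : ℚ := aeval ((p : ℚ) / q) g
  have hc : ![0, (c : ℝ)] ∈ G.multiplierRing := by
    have : (c : ℝ) = aeval b g := by
      rw [hb]
      simpa using (aeval_algebraMap_apply ℝ ((p : ℚ) / q) g).symm
    exact this ▸ vecCons_zero_aeval_mem_multiplierRing h hga
  have hR : ((p : ℝ) * q)⁻¹ ∈ Subring.closure {b, b⁻¹} :=
    hb ▸ inv_mul_mem_closure_div hcop (by positivity) (by positivity)
  obtain ⟨t, ht, x, hx, hβ⟩ := exists_intCast_pow_sub_one_eq_mul
    (R := Subring.closure {b, b⁻¹}) (n := p * q) (by push_cast; positivity) (by push_cast; exact hR)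
    hgb
  push_cast at hβ
  refine ⟨(p * q : ℝ) ^ t, one_lt_pow₀ hpq ht.ne', ?_, ?_⟩
  · have : ![1, (p * q : ℝ) ^ t] = 1 + ![0, c * x] := by
      ext i
      fin_cases i <;> simp [← hβ]
    exact this ▸ add_mem (one_mem _) (vecCons_zero_mul_mem_multiplierRing h h' hc hx)
  · -- `β⁻¹ - 1 = -(β - 1) * β⁻¹` with `β⁻¹ ∈ ℤ[b, b⁻¹]`
    have : ![1, (p * q : ℝ) ^ t]⁻¹ = 1 + ![0, c * -(x * ((p : ℝ) * q)⁻¹ ^ t)] := by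
      ext i
      fin_cases i
      · simp
      · have : (p * q : ℝ) ^ t ≠ 0 := by positivity
        simp only [Fin.mk_one, Pi.inv_apply, Pi.add_apply, Pi.one_apply, cons_val_one,
          cons_val_zero]
        rw [mul_neg, ← mul_assoc, ← hβ, inv_pow]
        field_simp
        ring
    exact this ▸ add_mem (one_mem _) (vecCons_zero_mul_mem_multiplierRing h h' hc
      (neg_mem (mul_mem hx (pow_mem hR t))))

end Plane

theorem stmt5_general (a b : ℝ) (ha : 0 < a) (halg : IsAlgebraic ℚ a) (ha1 : a ≠ 1)
    (p q : ℤ) (hp : 0 < p) (hq : 0 < q) (hcop : IsCoprime p q)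
    (hb : b = (p : ℝ) / (q : ℝ)) (hb1 : b ≠ 1) (hab : a ≠ b)
    (G : AddSubgroup (Fin 2 → ℝ))
    (hinv : (fun v => Matrix.vecMul v (Matrix.of ![![a, 0], ![0, b]])) ''
        (G : Set (Fin 2 → ℝ)) = (G : Set (Fin 2 → ℝ))) :
    {B : Matrix (Fin 2) (Fin 2) ℝ | ∃ n : ℤ, B = (Matrix.of ![![a, 0], ![0, b]]) ^ n} ⊂
      IG G := by
  have hb0 : 0 < b := hb ▸ div_pos (Int.cast_pos.2 hp) (Int.cast_pos.2 hq)
  have hunit : IsUnit ![a, b] :=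
    Pi.isUnit_iff.2 (Fin.forall_fin_two.2 ⟨ha.ne'.isUnit, hb0.ne'.isUnit⟩)
  have hA : Matrix.of ![![a, 0], ![0, b]] = diagonal ![a, b] := by
    ext i j
    fin_cases i <;> fin_cases j <;> simp
  rw [hA] at hinv ⊢
  obtain ⟨hM, hM'⟩ := (AddSubgroup.image_vecMul_diagonal_eq_iff hunit).1 hinv
  obtain ⟨β, hβ, h1, h2⟩ :=
    exists_one_lt_vecCons_one_mem_multiplierRing hM hM' halg hp hq hcop hb hb1 hab
  refine (Set.ssubset_iff_of_subset ?_).2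
    ⟨diagonal ![1, β], diagonal_mem_IG (by simp) (by simp; linarith) h1 h2, ?_⟩
  · rintro _ ⟨n, rfl⟩
    rw [diagonal_zpow hunit]
    exact diagonal_mem_IG (by simp [zpow_pos ha]) (by simp [zpow_pos hb0])
      (zpow_mem_of_inv_mem hM hM' n) (inv_zpow ![a, b] n ▸ zpow_mem_of_inv_mem hM' (by simpa) n)
  · rintro ⟨n, hn⟩
    rw [diagonal_zpow hunit, diagonal_injective.eq_iff] at hn
    have hn0 : n = 0 := by
      simpa [eq_comm, zpow_eq_one_iff_right₀ ha.le ha1] using congrFun hn 0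
    simpa [hn0, hβ.ne'] using congrFun hn 1

theorem stmt5 (a b : ℝ) (ha : 0 < a) (halg : IsAlgebraic ℚ a) (ha1 : a ≠ 1)
    (p q : ℤ) (hp : 0 < p) (hq : 0 < q) (hcop : IsCoprime p q)
    (hb : b = (p : ℝ) / (q : ℝ)) (hb1 : b ≠ 1) (hab : a ≠ b)
    (G : AddSubgroup (Fin 2 → ℝ)) (h11 : (![1, 1] : Fin 2 → ℝ) ∈ G)
    (hinv : (fun v => Matrix.vecMul v (Matrix.of ![![a, 0], ![0, b]])) ''
        (G : Set (Fin 2 → ℝ)) = (G : Set (Fin 2 → ℝ))) :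
    {B : Matrix (Fin 2) (Fin 2) ℝ | ∃ n : ℤ, B = (Matrix.of ![![a, 0], ![0, b]]) ^ n} ⊂
      IG G :=
  stmt5_general a b ha halg ha1 p q hp hq hcop hb hb1 hab G hinv
end

section
/- Let ψ be a monic polynomial with integer coefficients and let m be an integer with m > 1. Then there exist Laurent polynomials φ₁, φ₂ ∈ ℤ[t, t⁻¹] and a nonzero integer n such that m·φ₁(t) + ψ(t)·φ₂(t) + tⁿ = 1 in the ring ℤ[t, t⁻¹] of integer Laurent polynomials. -/
/-!
Since `ψ` is monic, `(ℤ/m)[t]/(ψ)` is a finite ring, so two powers of `t` coincide there: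
`t ^ j - t ^ i ∈ (m, ψ)` in `ℤ[t]` for some `i < j`. In `ℤ[t, t⁻¹]` the monomial `t ^ i` is a
unit, hence `t ^ (j - i) - 1 ∈ (m, ψ)` as well.
-/

open LaurentPolynomial

theorem exists_lt_pow_eq_pow_of_finite {M : Type*} [Monoid M] [Finite M] (x : M) :
    ∃ i j : ℕ, i < j ∧ x ^ i = x ^ j :=
  Set.finite_univ.exists_lt_map_eq_of_forall_mem (f := (x ^ ·)) fun _ ↦ Set.mem_univ _

namespace Polynomial

variable {R : Type*} [CommRing R] {I : Ideal R} {ψ : R[X]}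

theorem mem_map_C_sup_span_of_mk_map_eq_zero {p : R[X]}
    (hp : AdjoinRoot.mk (ψ.map (Ideal.Quotient.mk I)) (p.map (Ideal.Quotient.mk I)) = 0) :
    p ∈ I.map C ⊔ Ideal.span {ψ} := by
  obtain ⟨q', hq'⟩ := AdjoinRoot.mk_eq_zero.1 hp
  obtain ⟨q, rfl⟩ := map_surjective _ Ideal.Quotient.mk_surjective q'
  have hker : p - ψ * q ∈ I.map C := by
    rw [← Ideal.mk_ker (I := I), ← ker_mapRingHom, RingHom.mem_ker, map_sub, map_mul,
      coe_mapRingHom, hq', sub_self]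
  simpa using
    Submodule.add_mem_sup hker (Ideal.mul_mem_right q _ (Ideal.mem_span_singleton_self ψ))

theorem exists_X_pow_sub_X_pow_mem_map_C_sup_span [Finite (R ⧸ I)] (hψ : ψ.Monic) :
    ∃ i j : ℕ, i < j ∧ (X ^ j - X ^ i : R[X]) ∈ I.map C ⊔ Ideal.span {ψ} := by
  set ψ' := ψ.map (Ideal.Quotient.mk I)
  have := (hψ.map (Ideal.Quotient.mk I)).finite_adjoinRoot
  have : Finite (AdjoinRoot ψ') := Module.finite_of_finite (R ⧸ I)
  obtain ⟨i, j, hij, hpow⟩ := exists_lt_pow_eq_pow_of_finite (AdjoinRoot.root ψ')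
  refine ⟨i, j, hij, mem_map_C_sup_span_of_mk_map_eq_zero ?_⟩
  rw [Polynomial.map_sub, Polynomial.map_pow, Polynomial.map_pow, map_X, map_sub, map_pow,
    map_pow, AdjoinRoot.mk_X, hpow, sub_self]

theorem exists_X_pow_sub_X_pow_mem_span_intCast_pair {m : ℤ} (hm : m ≠ 0) {ψ : ℤ[X]}
    (hψ : ψ.Monic) :
    ∃ i j : ℕ, i < j ∧ (X ^ j - X ^ i : ℤ[X]) ∈ Ideal.span {(m : ℤ[X]), ψ} := by
  have : NeZero m.natAbs := ⟨Int.natAbs_ne_zero.2 hm⟩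
  have : Finite (ℤ ⧸ Ideal.span {m}) := .of_equiv _ (Int.quotientSpanEquivZMod m).toEquiv.symm
  simpa [Ideal.map_span, Ideal.span_insert] using
    exists_X_pow_sub_X_pow_mem_map_C_sup_span (I := Ideal.span {m}) hψ

end Polynomial

theorem LaurentPolynomial.T_sub_one_mem_map_toLaurent {R : Type*} [CommRing R]
    {J : Ideal (Polynomial R)} {i j : ℕ}
    (h : (Polynomial.X ^ j - Polynomial.X ^ i : Polynomial R) ∈ J) :
    T ((j : ℤ) - i) - 1 ∈ J.map Polynomial.toLaurent := by
  have hshift : T ((j : ℤ) - i) - 1 =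
      T (-(i : ℤ)) * Polynomial.toLaurent (Polynomial.X ^ j - Polynomial.X ^ i : Polynomial R) := by
    rw [map_sub, Polynomial.toLaurent_X_pow, Polynomial.toLaurent_X_pow, mul_sub, ← T_add,
      ← T_add, neg_add_cancel, T_zero, neg_add_eq_sub]
  rw [hshift]
  exact Ideal.mul_mem_left _ _ (Ideal.mem_map_of_mem _ h)

theorem stmt8 (ψ : Polynomial ℤ) (hψ : ψ.Monic) (m : ℤ) (hm : 1 < m) :
    ∃ (φ₁ φ₂ : LaurentPolynomial ℤ) (n : ℤ), n ≠ 0 ∧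
      (m : LaurentPolynomial ℤ) * φ₁ + ψ.toLaurent * φ₂ + LaurentPolynomial.T n = 1 := by
  obtain ⟨i, j, hij, hmem⟩ :=
    Polynomial.exists_X_pow_sub_X_pow_mem_span_intCast_pair (m := m) (by omega) hψ
  have h := T_sub_one_mem_map_toLaurent hmem
  rw [Ideal.map_span, Set.image_pair, map_intCast] at h
  obtain ⟨a, b, hab⟩ := Ideal.mem_span_pair.1 h
  exact ⟨-a, -b, j - i, by omega, by linear_combination -hab⟩
end

section
/- Let α be a transcendental real number and let p, q, r be polynomials with rational coefficients. If p(α)·2^{2/3} + q(α)·2^{1/3} + r(α) = 0, then p = q = r = 0. -/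
open Polynomial

lemma no_rat_cube (s : ℚ) : s ^ 3 ≠ 2 := by
  intro hs
  have h3 : ((s : ℝ)) ^ 3 = ((2 : ℤ) : ℝ) := by exact_mod_cast hs
  have hirr : Irrational (s : ℝ) := by
    refine irrational_nrt_of_notint_nrt 3 2 h3 ?_ (by norm_num)
    rintro ⟨y, hy⟩
    have hsy : s = (y : ℚ) := by exact_mod_cast hy
    have hy3 : y ^ 3 = 2 := by exact_mod_cast hsy ▸ hs
    have hl : 0 < y := by nlinarith [sq_nonneg y]
    have hr : y < 2 := by nlinarith [sq_nonneg y, sq_nonneg (y - 2)]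
    interval_cases y; omega
  exact (Rat.not_irrational s) hirr

noncomputable def T : ℝ := (2 : ℝ) ^ ((1 : ℝ) / 3)

lemma T_cube : T ^ 3 = 2 := by
  rw [T, ← Real.rpow_natCast ((2:ℝ) ^ ((1:ℝ)/3)) 3, ← Real.rpow_mul (by norm_num)]
  norm_num

lemma indep (a b c : ℚ) (h : (a : ℝ) * T ^ 2 + b * T + c = 0) :
    a = 0 ∧ b = 0 ∧ c = 0 := by
  have hirr : Irreducible ((X : ℚ[X]) ^ 3 - C 2) := by
    refine X_pow_sub_C_irreducible_of_prime (by norm_num) ?_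
    intro b hb; exact no_rat_cube b hb
  have hroot : Polynomial.aeval T ((X : ℚ[X]) ^ 3 - C 2) = 0 := by
    simp [T_cube]
  have hmin : minpoly ℚ T = (X : ℚ[X]) ^ 3 - C 2 :=
    (minpoly.eq_of_irreducible_of_monic hirr hroot (by monicity!)).symm
  have hdeg : (minpoly ℚ T).degree = 3 := by
    rw [hmin]; exact degree_X_pow_sub_C (by norm_num) 2
  set f : ℚ[X] := C a * X ^ 2 + C b * X + C c with hf
  have hfr : Polynomial.aeval T f = 0 := by
    simp only [hf, map_add, map_mul, map_pow, aeval_C, aeval_X, eq_ratCast]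
    linear_combination h
  have hf0 : f = 0 := by
    by_contra hne
    have h1 := minpoly.degree_le_of_ne_zero ℚ T hne hfr
    rw [hdeg] at h1
    have h2 : f.degree ≤ 2 := degree_quadratic_le
    have := h1.trans h2
    norm_num at this
  refine ⟨?_, ?_, ?_⟩
  · have := congrArg (fun g => Polynomial.coeff g 2) hf0
    simpa [hf, coeff_C] using this
  · have := congrArg (fun g => Polynomial.coeff g 1) hf0
    simpa [hf, coeff_C] using this
  · have := congrArg (fun g => Polynomial.coeff g 0) hf0
    simpa [hf, coeff_C] using this

lemma cube_form (a b c : ℚ) (h : 4*a^3 + 2*b^3 + c^3 - 6*a*b*c = 0) :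
    a = 0 ∧ b = 0 ∧ c = 0 := by
  have ht3 : T ^ 3 = 2 := T_cube
  have key : ((a:ℝ) * T^2 + b * T + c) *
      ((b^2 - a*c) * T^2 + (2*a^2 - b*c) * T + (c^2 - 2*a*b)) =
      (4*a^3 + 2*b^3 + c^3 - 6*a*b*c : ℝ) := by
    linear_combination ((a:ℝ)*(b^2 - a*c)*T + (a*(2*a^2 - b*c) + b*(b^2 - a*c))) * ht3
  have hz : ((a:ℝ) * T^2 + b * T + c) *
      ((b^2 - a*c) * T^2 + (2*a^2 - b*c) * T + (c^2 - 2*a*b)) = 0 := by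
    rw [key]; exact_mod_cast congrArg (fun x : ℚ => (x : ℝ)) h
  rcases mul_eq_zero.mp hz with hu | hw
  · exact indep a b c hu
  · have hw' := indep (b^2 - a*c) (2*a^2 - b*c) (c^2 - 2*a*b) (by push_cast; linear_combination hw)
    obtain ⟨h1, h2, h3⟩ := hw'
    by_cases ha : a = 0
    · have hb : b = 0 := by
        have hb2 : b ^ 2 = 0 := by linear_combination h1 + c * ha
        exact sq_eq_zero_iff.mp hb2
      have hc : c = 0 := by
        have hc2 : c ^ 2 = 0 := by linear_combination h3 + 2 * b * ha
        exact sq_eq_zero_iff.mp hc2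
      exact ⟨ha, hb, hc⟩
    · exfalso
      have hb : b ≠ 0 := by
        intro hb; apply ha
        have ha2 : a ^ 2 = 0 := by linear_combination h2 / 2 + c / 2 * hb
        exact sq_eq_zero_iff.mp ha2
      have hb3 : b ^ 3 = 2 * a ^ 3 := by
        have : b ^ 4 = 2 * a ^ 3 * b := by nlinarith [h1, h3]
        have := mul_right_cancel₀ hb (by linarith [this] : b ^ 3 * b = (2 * a ^ 3) * b)
        linarith [this]
      exact no_rat_cube (b / a) (by field_simp; linarith [hb3])

theorem stmt9 (α : ℝ) (htr : Transcendental ℚ α) (p q r : Polynomial ℚ)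
    (h : (Polynomial.aeval α p) * (2 : ℝ) ^ ((2 : ℝ) / 3) +
         (Polynomial.aeval α q) * (2 : ℝ) ^ ((1 : ℝ) / 3) +
         (Polynomial.aeval α r) = 0) :
    p = 0 ∧ q = 0 ∧ r = 0 := by
  have ht2 : (2 : ℝ) ^ ((2 : ℝ) / 3) = T ^ 2 := by
    rw [T, ← Real.rpow_natCast ((2:ℝ) ^ ((1:ℝ)/3)) 2, ← Real.rpow_mul (by norm_num)]
    norm_num
  set A := Polynomial.aeval α p with hA
  set B := Polynomial.aeval α q with hB
  set C := Polynomial.aeval α r with hC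
  have hu : A * T ^ 2 + B * T + C = 0 := by rw [ht2] at h; exact h
  have ht3 : T ^ 3 = 2 := T_cube
  have key : (A * T^2 + B * T + C) *
      ((B^2 - A*C) * T^2 + (2*A^2 - B*C) * T + (C^2 - 2*A*B)) =
      4*A^3 + 2*B^3 + C^3 - 6*A*B*C := by
    linear_combination (A*(B^2 - A*C)*T + (A*(2*A^2 - B*C) + B*(B^2 - A*C))) * ht3
  have hN : 4*A^3 + 2*B^3 + C^3 - 6*A*B*C = 0 := by rw [← key, hu]; ring
  have hQ : Polynomial.aeval α (4*p^3 + 2*q^3 + r^3 - 6*(p*q*r)) = 0 := by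
    simp only [map_add, map_sub, map_mul, map_pow, map_ofNat]
    linear_combination hN
  have hQ0 : (4*p^3 + 2*q^3 + r^3 - 6*(p*q*r) : ℚ[X]) = 0 := by
    by_contra hne
    exact htr ⟨_, hne, hQ⟩
  have heval : ∀ x : ℚ, p.eval x = 0 ∧ q.eval x = 0 ∧ r.eval x = 0 := by
    intro x
    have := congrArg (Polynomial.eval x) hQ0
    simp only [eval_add, eval_sub, eval_mul, eval_pow, eval_ofNat, eval_zero] at this
    exact cube_form (p.eval x) (q.eval x) (r.eval x) (by linarith [this])
  refine ⟨?_, ?_, ?_⟩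
  · exact Polynomial.funext (fun x => by simp [(heval x).1])
  · exact Polynomial.funext (fun x => by simp [(heval x).2.1])
  · exact Polynomial.funext (fun x => by simp [(heval x).2.2])
end

section
/- Let n ≥ 1 and let M be an additive subgroup of ℝⁿ. Suppose that for every ε > 0 there exist elements a₁, …, aₙ ∈ M that are linearly independent over ℝ and each satisfy ‖aᵢ‖ < ε (Euclidean norm). Then M is dense in ℝⁿ. -/
theorem stmt10 (n : ℕ) (hn : 1 ≤ n) (M : AddSubgroup (EuclideanSpace ℝ (Fin n)))
    (h : ∀ ε : ℝ, 0 < ε → ∃ a : Fin n → EuclideanSpace ℝ (Fin n),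
      (∀ i, a i ∈ M) ∧ LinearIndependent ℝ a ∧ ∀ i, ‖a i‖ < ε) :
    Dense (M : Set (EuclideanSpace ℝ (Fin n))) := by
  rw [Metric.dense_iff]
  intro x r hr
  have hnpos : (0 : ℝ) < n := by positivity
  have hδ : (0 : ℝ) < r / (2 * n) := by positivity
  obtain ⟨a, haM, hli, hsmall⟩ := h (r / (2 * n)) hδ
  have hcard : Fintype.card (Fin n) = Module.finrank ℝ (EuclideanSpace ℝ (Fin n)) := by
    simp
  haveI : Nonempty (Fin n) := ⟨⟨0, hn⟩⟩
  let b := basisOfLinearIndependentOfCardEqFinrank hli hcard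
  have hb : ∀ i, b i = a i := fun i => by
    simp [b, coe_basisOfLinearIndependentOfCardEqFinrank]
  set c : Fin n → ℝ := fun i => b.repr x i with hc
  have hx : x = ∑ i, c i • a i := by
    conv_lhs => rw [← b.sum_repr x]
    exact Finset.sum_congr rfl fun i _ => by rw [hb]
  set y : EuclideanSpace ℝ (Fin n) := ∑ i, (round (c i) : ℝ) • a i with hy
  have hyM : y ∈ M := by
    apply sum_mem
    intro i _
    rw [Int.cast_smul_eq_zsmul]
    exact zsmul_mem (haM i) _
  refine ⟨y, ?_, hyM⟩
  rw [Metric.mem_ball, dist_comm, dist_eq_norm, hy, hx, ← Finset.sum_sub_distrib]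
  have hbound : ‖∑ i, (c i • a i - (round (c i) : ℝ) • a i)‖ ≤ ∑ i : Fin n, (1/2) * (r / (2*n)) := by
    refine (norm_sum_le _ _).trans (Finset.sum_le_sum fun i _ => ?_)
    rw [← sub_smul, norm_smul]
    have h1 : |c i - (round (c i) : ℝ)| ≤ 1/2 := abs_sub_round _
    have h2 : ‖a i‖ ≤ r / (2*n) := (hsmall i).le
    rw [Real.norm_eq_abs]
    exact mul_le_mul h1 h2 (norm_nonneg _) (by norm_num)
  refine lt_of_le_of_lt hbound ?_
  rw [Finset.sum_const, Finset.card_fin, nsmul_eq_mul]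
  have : (n : ℝ) * (1/2 * (r / (2 * n))) = r / 4 := by
    field_simp
    ring
  rw [this]
  linarith
end

section
/- Let α be a positive transcendental real number and β a positive real number with β ≠ 1, β ≠ α, β ≠ 1/α. Let G be the additive subgroup of ℝ² generated by the set { q·(α^{2i}, β^{2i}) : q ∈ ℚ, i ∈ ℤ } ∪ { (α^{2i+1}, β^{2i+1}) : i ∈ ℤ }. Then G is dense in ℝ². -/
/-! For positive `α ≠ β` the vectors `(1, 1)` and `(α², β²)` form a real basis of `ℝ²`, and both
lie in the generating set with all their rational multiples (take `i = 0` and `i = 1`). The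
rational combinations of a real basis are dense, being the image of `ℚ²` under a linear
homeomorphism `ℝ² ≃ ℝ²`. -/

open Module

theorem Module.Basis.dense_addSubgroupClosure_ratCast_smul {ι E : Type*} [Fintype ι]
    [NormedAddCommGroup E] [NormedSpace ℝ E] (b : Basis ι ℝ E) :
    Dense (AddSubgroup.closure {v : E | ∃ q : ℚ, ∃ i, v = (q : ℝ) • b i} : Set E) := by
  have hdense : DenseRange fun q : ι → ℚ => b.equivFunL.symm fun i => (q i : ℝ) :=
    b.equivFunL.symm.surjective.denseRange.comp
      (DenseRange.piMap fun _ => Rat.denseRange_cast) b.equivFunL.symm.continuous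
  refine hdense.mono ?_
  rintro _ ⟨q, rfl⟩
  change b.equivFun.symm (fun i => (q i : ℝ)) ∈ _
  rw [Basis.equivFun_symm_apply]
  exact sum_mem fun i _ => AddSubgroup.subset_closure ⟨q i, i, rfl⟩

theorem EuclideanSpace.linearIndependent_one_one_pair {a b : ℝ} (hab : a ≠ b) :
    LinearIndependent ℝ ![!₂[1, 1], !₂[a, b]] := by
  rw [LinearIndependent.pair_iff]
  intro s t hst
  have h0 : s + t * a = 0 := by simpa using congrArg (· 0) hst
  have h1 : s + t * b = 0 := by simpa using congrArg (· 1) hst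
  have ht : t = 0 := by
    have : t * (a - b) = 0 := by linear_combination h0 - h1
    simpa [sub_ne_zero.mpr hab] using this
  exact ⟨by simpa [ht] using h0, ht⟩

theorem stmt11_general (α β : ℝ) (hα : 0 < α) (hβ : 0 < β)
    (hβα : β ≠ α) :
    Dense ((AddSubgroup.closure
        ({v | ∃ q : ℚ, ∃ i : ℤ, v = (q : ℝ) • ![α ^ (2 * i), β ^ (2 * i)]} ∪
         {v | ∃ i : ℤ, v = ![α ^ (2 * i + 1), β ^ (2 * i + 1)]}) :
        AddSubgroup (EuclideanSpace ℝ (Fin 2))) : Set (EuclideanSpace ℝ (Fin 2))) := by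
  have hsq : α ^ 2 ≠ β ^ 2 := (pow_left_inj₀ hα.le hβ.le two_ne_zero).not.mpr hβα.symm
  let b := basisOfLinearIndependentOfCardEqFinrank
    (EuclideanSpace.linearIndependent_one_one_pair hsq) (by simp)
  refine b.dense_addSubgroupClosure_ratCast_smul.mono
    (SetLike.coe_subset_coe.mpr (AddSubgroup.closure_mono ?_))
  rintro _ ⟨q, i, rfl⟩
  fin_cases i
  · exact Or.inl ⟨q, 0, by simp [b]⟩
  · exact Or.inl ⟨q, 1, by simp [b]⟩

theorem stmt11 (α β : ℝ) (hα : 0 < α) (htr : Transcendental ℚ α) (hβ : 0 < β)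
    (hβ1 : β ≠ 1) (hβα : β ≠ α) (hβα' : β ≠ α⁻¹) :
    Dense ((AddSubgroup.closure
        ({v | ∃ q : ℚ, ∃ i : ℤ, v = (q : ℝ) • ![α ^ (2 * i), β ^ (2 * i)]} ∪
         {v | ∃ i : ℤ, v = ![α ^ (2 * i + 1), β ^ (2 * i + 1)]}) :
        AddSubgroup (EuclideanSpace ℝ (Fin 2))) : Set (EuclideanSpace ℝ (Fin 2))) :=
  stmt11_general α β hα hβ hβα
end

section
/- Let α be a positive transcendental real number. Let G be the additive subgroup of ℝ² generated by the set { q·(α^{2i}, α^{-2i}) : q ∈ ℚ, i ∈ ℤ } ∪ { (α^{2i+1}, α^{-2i-1}) : i ∈ ℤ } ∪ { (2^{1/3}·α^{2i+1}, 0) : i ∈ ℤ }. Then G is dense in ℝ². -/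
/-! The ℚ-multiples of `(1, 1)` and `(α², α⁻²)` (the first family at `i = 0, 1`) already generate
a dense subgroup: these two vectors form an ℝ-basis of ℝ² since `α⁴ ≠ 1`, and the ℚ-span of an
ℝ-spanning family is dense, being the image of `ℚⁿ` under a continuous surjection `ℝⁿ → ℝ²`. -/

theorem AddSubgroup.dense_of_ratCast_smul_mem {ι E : Type*} [Fintype ι] [TopologicalSpace E]
    [AddCommGroup E] [Module ℝ E] [ContinuousAdd E] [ContinuousSMul ℝ E] {v : ι → E}
    (hv : Submodule.span ℝ (Set.range v) = ⊤) {S : AddSubgroup E}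
    (hS : ∀ (q : ℚ) (i : ι), (q : ℝ) • v i ∈ S) : Dense (S : Set E) := by
  have hsurj : Function.Surjective (Fintype.linearCombination ℝ v) :=
    (span_range_eq_top_iff_surjective_fintypeLinearCombination ℝ v).1 hv
  have hcont : Continuous (Fintype.linearCombination ℝ v) := by
    rw [show ⇑(Fintype.linearCombination ℝ v) = fun c ↦ ∑ i, c i • v i from
      funext (Fintype.linearCombination_apply ℝ v)]
    fun_prop
  have hdense := hsurj.denseRange.comp (DenseRange.piMap fun _ ↦ Rat.denseRange_cast) hcont
  refine hdense.mono ?_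
  rintro _ ⟨q, rfl⟩
  simpa only [Function.comp_apply, Pi.map_apply, Fintype.linearCombination_apply,
    SetLike.mem_coe] using S.sum_mem fun i _ ↦ hS (q i) i

theorem Transcendental.ne_inv {R K : Type*} [CommRing R] [Nontrivial R] [Field K] [Algebra R K]
    {x : K} (hx : Transcendental R x) : x ≠ x⁻¹ := by
  intro h
  rcases eq_or_ne x 0 with rfl | h0
  · exact hx isAlgebraic_zero
  have hsq : x ^ 2 = 1 := by
    rw [sq]
    nth_rewrite 2 [h]
    exact mul_inv_cancel₀ h0
  exact hx (IsAlgebraic.of_pow two_pos (hsq ▸ isAlgebraic_one))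

theorem linearIndependent_one_one_inv {x : ℝ} (hx : x ≠ x⁻¹) :
    LinearIndependent ℝ ![!₂[1, 1], !₂[x, x⁻¹]] := by
  refine LinearIndependent.pair_iff.2 fun s t hst ↦ ?_
  have h0 : s + t * x = 0 := by simpa using congr($hst 0)
  have h1 : s + t * x⁻¹ = 0 := by simpa using congr($hst 1)
  have ht : t = 0 := by
    have : t * (x - x⁻¹) = 0 := by linear_combination h0 - h1
    exact (mul_eq_zero.1 this).resolve_right (sub_ne_zero.2 hx)
  subst ht
  exact ⟨by simpa using h0, rfl⟩

theorem stmt12_general (α : ℝ) (htr : Transcendental ℚ α) :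
    Dense ((AddSubgroup.closure
        ({v | ∃ q : ℚ, ∃ i : ℤ, v = (q : ℝ) • ![α ^ (2 * i), α ^ (-(2 * i))]} ∪
         {v | ∃ i : ℤ, v = ![α ^ (2 * i + 1), α ^ (-(2 * i) - 1)]} ∪
         {v | ∃ i : ℤ, v = ![(2 : ℝ) ^ ((1 : ℝ) / 3) * α ^ (2 * i + 1), 0]}) :
        AddSubgroup (EuclideanSpace ℝ (Fin 2))) : Set (EuclideanSpace ℝ (Fin 2))) := by
  have hspan : Submodule.span ℝ (Set.range ![!₂[1, 1], !₂[α ^ 2, (α ^ 2)⁻¹]]) = ⊤ :=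
    (linearIndependent_one_one_inv (htr.pow two_pos).ne_inv).span_eq_top_of_card_eq_finrank'
      (by simp)
  refine AddSubgroup.dense_of_ratCast_smul_mem hspan fun q i ↦ AddSubgroup.subset_closure ?_
  refine .inl (.inl ⟨q, i, ?_⟩)
  fin_cases i <;> simp

theorem stmt12 (α : ℝ) (hα : 0 < α) (htr : Transcendental ℚ α) :
    Dense ((AddSubgroup.closure
        ({v | ∃ q : ℚ, ∃ i : ℤ, v = (q : ℝ) • ![α ^ (2 * i), α ^ (-(2 * i))]} ∪
         {v | ∃ i : ℤ, v = ![α ^ (2 * i + 1), α ^ (-(2 * i) - 1)]} ∪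
         {v | ∃ i : ℤ, v = ![(2 : ℝ) ^ ((1 : ℝ) / 3) * α ^ (2 * i + 1), 0]}) :
        AddSubgroup (EuclideanSpace ℝ (Fin 2))) : Set (EuclideanSpace ℝ (Fin 2))) :=
  stmt12_general α htr
end

section
/- Let n ≥ 1, let M be an additive subgroup of ℝⁿ that is dense in ℝⁿ and contains u = (1,1,…,1), and set M⁺ = { g ∈ M : every coordinate of g is strictly positive } ∪ {0}. Let φ : M → ℝ be an additive map with φ(g) ≥ 0 for all g ∈ M⁺ and φ(u) = 1. Then there exist nonnegative real numbers r₁, …, rₙ with r₁ + ⋯ + rₙ = 1 such that φ(x) = r₁x₁ + ⋯ + rₙxₙ for every x = (x₁,…,xₙ) ∈ M. -/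
/-!
A state `φ` satisfies `φ g ≤ b` whenever every coordinate of `g` is at most `b`: for a rational
`p / q > b`, the element `p • u - q • g` lies in `M⁺`. Hence `|φ g| ≤ ‖g‖`, so `φ` is Lipschitz
and, `M` being dense, extends to a continuous additive, hence linear, functional `L` on `ℝⁿ`.
By density and continuity `L` is nonnegative on the closed positive orthant, so its coefficients
`rᵢ = L eᵢ` are nonnegative, and they sum to `L u = φ u = 1`.
-/

open Filter Topology

/-- The positive cone of an additive subgroup `M` of `ℝⁿ`:
elements of `M` all of whose coordinates are strictly positive, together with `0`. -/
def Mplus (n : ℕ) (M : AddSubgroup (EuclideanSpace ℝ (Fin n))) :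
    Set (EuclideanSpace ℝ (Fin n)) :=
  {g | g ∈ M ∧ ∀ i, 0 < g i} ∪ {0}

theorem Dense.exists_continuousLinearMap_eq {E F : Type*}
    [NormedAddCommGroup E] [NormedSpace ℝ E] [NormedAddCommGroup F] [NormedSpace ℝ F]
    [CompleteSpace F] {M : AddSubgroup E} (hM : Dense (M : Set E)) (φ : M →+ F)
    (hφ : UniformContinuous φ) : ∃ L : E →L[ℝ] F, ∀ g : M, L g = φ g := by
  have hui : IsUniformInducing ((↑) : M → E) := isUniformEmbedding_subtype_val.isUniformInducing
  let Φ : E → F := (hui.isDenseInducing hM.denseRange_val).extend φ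
  have hΦ : Continuous Φ :=
    (uniformContinuous_uniformly_extend hui hM.denseRange_val hφ).continuous
  have hΦφ : ∀ g : M, Φ g = φ g := (hui.isDenseInducing hM.denseRange_val).extend_eq hφ.continuous
  have hΦadd : ∀ x y, Φ (x + y) = Φ x + Φ y := by
    have : (fun p : E × E => Φ (p.1 + p.2)) = fun p => Φ p.1 + Φ p.2 := by
      refine Continuous.ext_on (hM.prod hM) (by fun_prop) (by fun_prop) ?_
      rintro ⟨x, y⟩ ⟨hx, hy⟩
      have := hΦφ (⟨x, hx⟩ + ⟨y, hy⟩)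
      rw [map_add, ← hΦφ, ← hΦφ] at this
      exact this
    exact fun x y => congrFun this (x, y)
  exact ⟨(AddMonoidHom.mk' Φ hΦadd).toRealLinearMap hΦ, hΦφ⟩

theorem EuclideanSpace.apply_eq_sum_mul_single {ι : Type*} [Fintype ι] [DecidableEq ι]
    (L : EuclideanSpace ℝ ι →L[ℝ] ℝ) (x : EuclideanSpace ℝ ι) :
    L x = ∑ i, L (EuclideanSpace.single i 1) * x i := by
  conv_lhs => rw [← (EuclideanSpace.basisFun ι ℝ).sum_repr x]
  simp [map_sum, mul_comm]

theorem EuclideanSpace.map_nonneg_of_forall_pos {ι : Type*} [Fintype ι]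
    {L : EuclideanSpace ℝ ι →L[ℝ] ℝ} (hL : ∀ x : EuclideanSpace ℝ ι, (∀ i, 0 < x i) → 0 ≤ L x)
    {x : EuclideanSpace ℝ ι} (hx : ∀ i, 0 ≤ x i) : 0 ≤ L x := by
  let u : EuclideanSpace ℝ ι := WithLp.toLp 2 fun _ => 1
  have hlim : Tendsto (fun ε : ℝ => L (x + ε • u)) (𝓝[>] 0) (𝓝 (L x)) := by
    have : Continuous fun ε : ℝ => L (x + ε • u) := by fun_prop
    simpa using this.continuousWithinAt.tendsto (x := 0) (s := Set.Ioi 0)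
  refine ge_of_tendsto hlim <|
    eventually_nhdsWithin_of_forall fun ε (hε : 0 < ε) => hL _ fun i => ?_
  simp [u]
  linarith [hx i]

theorem Dense.map_nonneg_of_forall_pos {ι : Type*} [Fintype ι] {M : Set (EuclideanSpace ℝ ι)}
    (hM : Dense M) {L : EuclideanSpace ℝ ι →L[ℝ] ℝ} (hL : ∀ g ∈ M, (∀ i, 0 < g i) → 0 ≤ L g)
    {x : EuclideanSpace ℝ ι} (hx : ∀ i, 0 < x i) : 0 ≤ L x := by
  let C : Set (EuclideanSpace ℝ ι) := {y | ∀ i, 0 < y i}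
  have hC : IsOpen C := by
    simp only [C, Set.ofPred_forall]
    exact isOpen_iInter_of_finite fun i => isOpen_lt continuous_const (by fun_prop)
  have hsub : C ∩ M ⊆ {y | 0 ≤ L y} := fun y ⟨hyC, hyM⟩ => hL y hyM hyC
  exact (isClosed_le continuous_const L.continuous).closure_subset_iff.mpr hsub
    (hM.open_subset_closure_inter hC hx)

section State

variable {n : ℕ} {M : AddSubgroup (EuclideanSpace ℝ (Fin n))}
  {hu : (WithLp.toLp 2 (fun _ => 1) : EuclideanSpace ℝ (Fin n)) ∈ M} {φ : M →+ ℝ}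

theorem state_le_of_forall_apply_le
    (hpos : ∀ g : M, (g : EuclideanSpace ℝ (Fin n)) ∈ Mplus n M → 0 ≤ φ g)
    (hunit : φ ⟨WithLp.toLp 2 (fun _ => 1), hu⟩ = 1) (g : M) {b : ℝ}
    (hb : ∀ i, (g : EuclideanSpace ℝ (Fin n)) i ≤ b) : φ g ≤ b := by
  refine le_of_forall_lt_rat_imp_le fun q hq => ?_
  have hden : (0 : ℝ) < q.den := by positivity
  rw [Rat.cast_def] at hq ⊢
  have hmem : ((q.num • ⟨_, hu⟩ - q.den • g : M) : EuclideanSpace ℝ (Fin n)) ∈ Mplus n M := by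
    refine Or.inl ⟨SetLike.coe_mem _, fun i => ?_⟩
    have := (hb i).trans_lt hq
    rw [lt_div_iff₀ hden] at this
    simpa [mul_comm] using this
  have := hpos _ hmem
  simp only [map_sub, map_zsmul, map_nsmul, hunit, zsmul_eq_mul, nsmul_eq_mul, mul_one,
    sub_nonneg] at this
  rwa [le_div_iff₀ hden, mul_comm]

theorem abs_state_le_norm
    (hpos : ∀ g : M, (g : EuclideanSpace ℝ (Fin n)) ∈ Mplus n M → 0 ≤ φ g)
    (hunit : φ ⟨WithLp.toLp 2 (fun _ => 1), hu⟩ = 1) (g : M) :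
    |φ g| ≤ ‖(g : EuclideanSpace ℝ (Fin n))‖ := by
  refine abs_le.mpr ⟨?_, state_le_of_forall_apply_le hpos hunit g fun i => ?_⟩
  · have := state_le_of_forall_apply_le hpos hunit (-g) fun i =>
      (neg_le_abs _).trans (PiLp.norm_apply_le (g : EuclideanSpace ℝ (Fin n)) i)
    rw [map_neg] at this
    linarith
  · exact (le_abs_self _).trans (PiLp.norm_apply_le (g : EuclideanSpace ℝ (Fin n)) i)

end State

theorem stmt13_general (n : ℕ) (M : AddSubgroup (EuclideanSpace ℝ (Fin n)))
    (hdense : Dense (M : Set (EuclideanSpace ℝ (Fin n))))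
    (hu : ((WithLp.toLp 2 (fun _ => 1 : Fin n → ℝ) : EuclideanSpace ℝ (Fin n))) ∈ M)
    (φ : M →+ ℝ)
    (hpos : ∀ g : M, (g : EuclideanSpace ℝ (Fin n)) ∈ Mplus n M → 0 ≤ φ g)
    (hunit : φ ⟨WithLp.toLp 2 (fun _ => 1), hu⟩ = 1) :
    ∃ r : Fin n → ℝ, (∀ i, 0 ≤ r i) ∧ (∑ i, r i) = 1 ∧
      ∀ x : M, φ x = ∑ i, r i * (x : EuclideanSpace ℝ (Fin n)) i := by
  have hlip : LipschitzWith 1 φ := by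
    simpa using AddMonoidHomClass.lipschitz_of_bound φ 1 fun g => by
      simpa using abs_state_le_norm hpos hunit g
  obtain ⟨L, hL⟩ := hdense.exists_continuousLinearMap_eq φ hlip.uniformContinuous
  have hLpos : ∀ x : EuclideanSpace ℝ (Fin n), (∀ i, 0 < x i) → 0 ≤ L x := fun x =>
    hdense.map_nonneg_of_forall_pos fun g hgM hg =>
      (hL ⟨g, hgM⟩).symm ▸ hpos ⟨g, hgM⟩ (Or.inl ⟨hgM, hg⟩)
  refine ⟨fun i => L (EuclideanSpace.single i 1), fun i => ?_, ?_, fun x => ?_⟩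
  · exact EuclideanSpace.map_nonneg_of_forall_pos hLpos fun j => by
      by_cases h : j = i <;> simp [h]
  · have := EuclideanSpace.apply_eq_sum_mul_single L (WithLp.toLp 2 fun _ => 1)
    simpa [hL ⟨_, hu⟩, hunit] using this.symm
  · rw [← hL, EuclideanSpace.apply_eq_sum_mul_single]

theorem stmt13 (n : ℕ) (hn : 1 ≤ n) (M : AddSubgroup (EuclideanSpace ℝ (Fin n)))
    (hdense : Dense (M : Set (EuclideanSpace ℝ (Fin n))))
    (hu : ((WithLp.toLp 2 (fun _ => 1 : Fin n → ℝ) : EuclideanSpace ℝ (Fin n))) ∈ M)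
    (φ : M →+ ℝ)
    (hpos : ∀ g : M, (g : EuclideanSpace ℝ (Fin n)) ∈ Mplus n M → 0 ≤ φ g)
    (hunit : φ ⟨WithLp.toLp 2 (fun _ => 1), hu⟩ = 1) :
    ∃ r : Fin n → ℝ, (∀ i, 0 ≤ r i) ∧ (∑ i, r i) = 1 ∧
      ∀ x : M, φ x = ∑ i, r i * (x : EuclideanSpace ℝ (Fin n)) i :=
  stmt13_general n M hdense hu φ hpos hunit
end

section
/- Let n ≥ 1, let M be an additive subgroup of ℝⁿ that is dense in ℝⁿ and contains u = (1,1,…,1), and set M⁺ = { g ∈ M : every coordinate of g is strictly positive } ∪ {0}. Let φ : M → ℝ be an additive map with φ(g) ≥ 0 for all g ∈ M⁺ and φ(u) = 1. Then φ is continuous on M with respect to the topology induced by the Euclidean norm of ℝⁿ. -/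
section State

variable {n : ℕ} {M : AddSubgroup (EuclideanSpace ℝ (Fin n))}
  {hu : (WithLp.toLp 2 (fun _ => 1) : EuclideanSpace ℝ (Fin n)) ∈ M} {φ : M →+ ℝ}

theorem natCast_mul_state_le_one
    (hpos : ∀ g : M, (g : EuclideanSpace ℝ (Fin n)) ∈ Mplus n M → 0 ≤ φ g)
    (hunit : φ ⟨WithLp.toLp 2 (fun _ => 1), hu⟩ = 1) {h : M} {k : ℕ}
    (hh : ∀ i, (k : ℝ) * (h : EuclideanSpace ℝ (Fin n)) i < 1) :
    (k : ℝ) * φ h ≤ 1 := by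
  set u : M := ⟨WithLp.toLp 2 (fun _ => 1), hu⟩
  have hcone : ((u - k • h : M) : EuclideanSpace ℝ (Fin n)) ∈ Mplus n M := by
    refine Or.inl ⟨(u - k • h).2, fun i => ?_⟩
    simpa [u, sub_pos] using hh i
  have hφ : φ (u - k • h) = 1 - (k : ℝ) * φ h := by
    rw [map_sub, map_nsmul, hunit, nsmul_eq_mul]
  linarith [hφ ▸ hpos _ hcone]

theorem natCast_mul_abs_state_le_one
    (hpos : ∀ g : M, (g : EuclideanSpace ℝ (Fin n)) ∈ Mplus n M → 0 ≤ φ g)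
    (hunit : φ ⟨WithLp.toLp 2 (fun _ => 1), hu⟩ = 1) {g : M} {k : ℕ}
    (hg : (k : ℝ) * ‖(g : EuclideanSpace ℝ (Fin n))‖ < 1) :
    (k : ℝ) * |φ g| ≤ 1 := by
  have habs (i : Fin n) : (k : ℝ) * |(g : EuclideanSpace ℝ (Fin n)) i| < 1 := by
    have := PiLp.norm_apply_le (g : EuclideanSpace ℝ (Fin n)) i
    rw [Real.norm_eq_abs] at this
    exact lt_of_le_of_lt (by gcongr) hg
  have hle : (k : ℝ) * φ g ≤ 1 := natCast_mul_state_le_one hpos hunit fun i =>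
    lt_of_le_of_lt (by gcongr; exact le_abs_self _) (habs i)
  have hge : (k : ℝ) * φ (-g) ≤ 1 := natCast_mul_state_le_one hpos hunit fun i =>
    lt_of_le_of_lt (by gcongr; exact neg_le_abs _) (habs i)
  rw [map_neg] at hge
  rcases abs_cases (φ g) with ⟨h, _⟩ | ⟨h, _⟩ <;> rw [h] <;> linarith

end State

theorem stmt14_general (n : ℕ) (M : AddSubgroup (EuclideanSpace ℝ (Fin n)))
    (hu : ((WithLp.toLp 2 (fun _ => 1) : EuclideanSpace ℝ (Fin n))) ∈ M)
    (φ : M →+ ℝ)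
    (hpos : ∀ g : M, (g : EuclideanSpace ℝ (Fin n)) ∈ Mplus n M → 0 ≤ φ g)
    (hunit : φ ⟨(WithLp.toLp 2 (fun _ => 1)), hu⟩ = 1) :
    Continuous φ := by
  refine continuous_of_continuousAt_zero φ (Metric.continuousAt_iff.mpr fun ε hε => ?_)
  obtain ⟨k, hk⟩ := exists_nat_one_div_lt hε
  have hk0 : (0 : ℝ) < k + 1 := by positivity
  refine ⟨1 / (k + 1), by positivity, fun {g} hg => ?_⟩
  rw [dist_zero_right, AddSubgroup.coe_norm, lt_div_iff₀' hk0] at hg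
  have hbound := natCast_mul_abs_state_le_one hpos hunit (k := k + 1) (by exact_mod_cast hg)
  rw [map_zero, dist_zero_right, Real.norm_eq_abs]
  push_cast at hbound
  exact lt_of_le_of_lt ((le_div_iff₀' hk0).mpr hbound) hk

theorem stmt14 (n : ℕ) (hn : 1 ≤ n) (M : AddSubgroup (EuclideanSpace ℝ (Fin n)))
    (hdense : Dense (M : Set (EuclideanSpace ℝ (Fin n))))
    (hu : ((WithLp.toLp 2 (fun _ => 1) : EuclideanSpace ℝ (Fin n))) ∈ M)
    (φ : M →+ ℝ)
    (hpos : ∀ g : M, (g : EuclideanSpace ℝ (Fin n)) ∈ Mplus n M → 0 ≤ φ g)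
    (hunit : φ ⟨(WithLp.toLp 2 (fun _ => 1)), hu⟩ = 1) :
    Continuous φ :=
  stmt14_general n M hu φ hpos hunit
end

section
/- Let n ≥ 1, let M be an additive subgroup of ℝⁿ that is dense in ℝⁿ and contains u = (1,1,…,1), and set M⁺ = { g ∈ M : every coordinate of g is strictly positive } ∪ {0}. Let φ : M → ℝ be an additive map with φ(g) ≥ 0 for all g ∈ M⁺ and φ(u) = 1. If (gᵢ) is a sequence in M that is increasing (i.e. gⱼ − gᵢ ∈ M⁺ whenever i < j) and converges in the Euclidean norm of ℝⁿ to an element g ∈ M, then φ(gᵢ) converges to φ(g). -/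
/-!
A state is bounded by the order-unit norm: if every coordinate of `v` is `< t`, then
`⌈(N+1) t⌉ u - (N+1) v` lies in `M⁺` for all `N`, so `φ v ≤ t + 1/(N+1)`. Hence
`|φ v| ≤ max_k |v k| ≤ ‖v‖`, so `φ` is continuous on `M` and commutes with limits in `M`.
-/

open Filter Topology

namespace Mplus

variable {n : ℕ} {M : AddSubgroup (EuclideanSpace ℝ (Fin n))}
  {hu : (WithLp.toLp 2 (fun _ => (1 : ℝ)) : EuclideanSpace ℝ (Fin n)) ∈ M}
  {φ : M →+ ℝ}

theorem map_le_of_forall_apply_lt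
    (hpos : ∀ v : M, (v : EuclideanSpace ℝ (Fin n)) ∈ Mplus n M → 0 ≤ φ v)
    (hunit : φ ⟨WithLp.toLp 2 (fun _ => (1 : ℝ)), hu⟩ = 1)
    (v : M) {t : ℝ} (hv : ∀ k, (v : EuclideanSpace ℝ (Fin n)) k < t) : φ v ≤ t := by
  have key : ∀ N : ℕ, ((N : ℝ) + 1) * φ v ≤ ((N : ℝ) + 1) * t + 1 := by
    intro N
    set m : ℤ := ⌈((N : ℝ) + 1) * t⌉
    have hmem :
        ((m • ⟨_, hu⟩ - ((N : ℤ) + 1) • v : M) : EuclideanSpace ℝ (Fin n)) ∈ Mplus n M := by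
      refine Or.inl ⟨SetLike.coe_mem _, fun k => ?_⟩
      have hlt : ((N : ℝ) + 1) * (v : EuclideanSpace ℝ (Fin n)) k < ((N : ℝ) + 1) * t :=
        mul_lt_mul_of_pos_left (hv k) (by positivity)
      simp only [AddSubgroup.coe_sub, AddSubgroup.coe_zsmul, PiLp.sub_apply, PiLp.smul_apply,
        zsmul_eq_mul, mul_one]
      push_cast
      linarith [Int.le_ceil (((N : ℝ) + 1) * t)]
    have h := hpos _ hmem
    rw [map_sub, map_zsmul, map_zsmul, hunit, zsmul_eq_mul, zsmul_eq_mul] at h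
    push_cast at h
    linarith [Int.ceil_lt_add_one (((N : ℝ) + 1) * t)]
  by_contra! hlt
  obtain ⟨N, hN⟩ := exists_nat_gt (1 / (φ v - t))
  have := (div_lt_iff₀ (sub_pos.mpr hlt)).mp hN
  linarith [key N]

theorem norm_map_le
    (hpos : ∀ v : M, (v : EuclideanSpace ℝ (Fin n)) ∈ Mplus n M → 0 ≤ φ v)
    (hunit : φ ⟨WithLp.toLp 2 (fun _ => (1 : ℝ)), hu⟩ = 1) (v : M) : ‖φ v‖ ≤ ‖v‖ := by
  have map_le : ∀ w : M, φ w ≤ ‖w‖ := fun w =>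
    le_of_forall_pos_le_add fun δ hδ =>
      map_le_of_forall_apply_lt hpos hunit w fun k =>
        calc (w : EuclideanSpace ℝ (Fin n)) k ≤ ‖(w : EuclideanSpace ℝ (Fin n)) k‖ :=
              Real.le_norm_self _
          _ ≤ ‖w‖ := PiLp.norm_apply_le _ k
          _ < ‖w‖ + δ := lt_add_of_pos_right _ hδ
  rw [Real.norm_eq_abs, abs_le]
  constructor
  · linarith [map_le (-v), map_neg φ v, norm_neg v]
  · exact map_le v

theorem continuous_map
    (hpos : ∀ v : M, (v : EuclideanSpace ℝ (Fin n)) ∈ Mplus n M → 0 ≤ φ v)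
    (hunit : φ ⟨WithLp.toLp 2 (fun _ => (1 : ℝ)), hu⟩ = 1) : Continuous φ :=
  AddMonoidHomClass.continuous_of_bound φ 1 fun v => by
    simpa using norm_map_le hpos hunit v

end Mplus

theorem stmt15_general (n : ℕ) (M : AddSubgroup (EuclideanSpace ℝ (Fin n)))
    (hu : ((WithLp.toLp 2 (fun _ => (1 : ℝ)) : EuclideanSpace ℝ (Fin n))) ∈ M)
    (φ : M →+ ℝ)
    
    (hpos : ∀ v : M, (v : EuclideanSpace ℝ (Fin n)) ∈ Mplus n M → 0 ≤ φ v)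
    (hunit : φ ⟨(WithLp.toLp 2 (fun _ => (1 : ℝ))), hu⟩ = 1)
    (g : ℕ → M) (gl : M)
    (hconv : Filter.Tendsto (fun i => (g i : EuclideanSpace ℝ (Fin n))) Filter.atTop
      (nhds (gl : EuclideanSpace ℝ (Fin n)))) :
    Filter.Tendsto (fun i => φ (g i)) Filter.atTop (nhds (φ gl)) :=
  ((Mplus.continuous_map hpos hunit).tendsto gl).comp (tendsto_subtype_rng.mpr hconv)

theorem stmt15 (n : ℕ) (hn : 1 ≤ n) (M : AddSubgroup (EuclideanSpace ℝ (Fin n)))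
    (hdense : Dense (M : Set (EuclideanSpace ℝ (Fin n))))
    (hu : ((WithLp.toLp 2 (fun _ => (1 : ℝ)) : EuclideanSpace ℝ (Fin n))) ∈ M)
    (φ : M →+ ℝ)
    (hpos : ∀ v : M, (v : EuclideanSpace ℝ (Fin n)) ∈ Mplus n M → 0 ≤ φ v)
    (hunit : φ ⟨(WithLp.toLp 2 (fun _ => (1 : ℝ))), hu⟩ = 1)
    (g : ℕ → M) (gl : M)
    (hmono : ∀ i j : ℕ, i < j →
      ((g j : EuclideanSpace ℝ (Fin n)) - (g i : EuclideanSpace ℝ (Fin n))) ∈ Mplus n M)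
    (hconv : Filter.Tendsto (fun i => (g i : EuclideanSpace ℝ (Fin n))) Filter.atTop
      (nhds (gl : EuclideanSpace ℝ (Fin n)))) :
    Filter.Tendsto (fun i => φ (g i)) Filter.atTop (nhds (φ gl)) :=
  stmt15_general n M hu φ hpos hunit g gl hconv
end

section
/- Let n ≥ 1, let M be an additive subgroup of ℝⁿ that is dense in ℝⁿ and contains u = (1,1,…,1), and set M⁺ = { g ∈ M : every coordinate of g is strictly positive } ∪ {0}. Let φ : M → ℝ be an additive map with φ(g) ≥ 0 for all g ∈ M⁺ and φ(u) = 1. If (hᵢ) is a sequence in M that is Cauchy with respect to the Euclidean norm of ℝⁿ, then (φ(hᵢ)) is a Cauchy sequence of real numbers. -/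
section OrderUnit

variable {n : ℕ} {M : AddSubgroup (EuclideanSpace ℝ (Fin n))}
  {hu : (WithLp.toLp 2 (fun _ => (1 : ℝ)) : EuclideanSpace ℝ (Fin n)) ∈ M} {φ : M →+ ℝ}

lemma apply_le_natCast_of_forall_lt
    (hpos : ∀ v : M, (v : EuclideanSpace ℝ (Fin n)) ∈ Mplus n M → 0 ≤ φ v)
    (hunit : φ ⟨WithLp.toLp 2 (fun _ => (1 : ℝ)), hu⟩ = 1)
    {w : M} {m : ℕ} (hw : ∀ i, (w : EuclideanSpace ℝ (Fin n)) i < m) : φ w ≤ m := by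
  have h := hpos (m • ⟨_, hu⟩ - w) (Or.inl ⟨SetLike.coe_mem _, fun i => by simpa using hw i⟩)
  rw [map_sub, map_nsmul, hunit, nsmul_eq_mul, mul_one] at h
  linarith

lemma natCast_mul_abs_apply_le
    (hpos : ∀ v : M, (v : EuclideanSpace ℝ (Fin n)) ∈ Mplus n M → 0 ≤ φ v)
    (hunit : φ ⟨WithLp.toLp 2 (fun _ => (1 : ℝ)), hu⟩ = 1) (v : M) (k : ℕ) :
    k * |φ v| ≤ k * ‖(v : EuclideanSpace ℝ (Fin n))‖ + 1 := by
  set m := ⌊k * ‖(v : EuclideanSpace ℝ (Fin n))‖⌋₊ + 1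
  have hcoord : ∀ i, |((k • v : M) : EuclideanSpace ℝ (Fin n)) i| < m := fun i =>
    calc |((k • v : M) : EuclideanSpace ℝ (Fin n)) i|
        = k * |(v : EuclideanSpace ℝ (Fin n)) i| := by simp [abs_mul]
      _ ≤ k * ‖(v : EuclideanSpace ℝ (Fin n))‖ := by
        gcongr
        simpa using PiLp.norm_apply_le (v : EuclideanSpace ℝ (Fin n)) i
      _ < m := by exact_mod_cast Nat.lt_floor_add_one _
  have hle : φ (k • v) ≤ m :=
    apply_le_natCast_of_forall_lt hpos hunit fun i => (abs_lt.1 (hcoord i)).2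
  have hge : φ (-(k • v)) ≤ m :=
    apply_le_natCast_of_forall_lt hpos hunit fun i => by
      simpa [neg_lt] using (abs_lt.1 (hcoord i)).1
  have hm : (m : ℝ) ≤ k * ‖(v : EuclideanSpace ℝ (Fin n))‖ + 1 := by
    push_cast [m]
    gcongr
    exact Nat.floor_le (by positivity)
  rw [map_neg, map_nsmul, nsmul_eq_mul] at hge
  rw [map_nsmul, nsmul_eq_mul] at hle
  calc (k : ℝ) * |φ v| = |k * φ v| := by rw [abs_mul, Nat.abs_cast]
    _ ≤ k * ‖(v : EuclideanSpace ℝ (Fin n))‖ + 1 := abs_le.2 ⟨by linarith, by linarith⟩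

lemma abs_apply_le_norm
    (hpos : ∀ v : M, (v : EuclideanSpace ℝ (Fin n)) ∈ Mplus n M → 0 ≤ φ v)
    (hunit : φ ⟨WithLp.toLp 2 (fun _ => (1 : ℝ)), hu⟩ = 1) (v : M) :
    |φ v| ≤ ‖(v : EuclideanSpace ℝ (Fin n))‖ := by
  by_contra! hlt
  obtain ⟨k, hk⟩ := exists_nat_gt (1 / (|φ v| - ‖(v : EuclideanSpace ℝ (Fin n))‖))
  rw [div_lt_iff₀ (sub_pos.2 hlt)] at hk
  linarith [natCast_mul_abs_apply_le hpos hunit v k]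

end OrderUnit

theorem stmt16_general (n : ℕ) (M : AddSubgroup (EuclideanSpace ℝ (Fin n)))
    (hu : (WithLp.toLp 2 (fun _ => (1 : ℝ)) : EuclideanSpace ℝ (Fin n)) ∈ M)
    (φ : M →+ ℝ)
    (hpos : ∀ v : M, (v : EuclideanSpace ℝ (Fin n)) ∈ Mplus n M → 0 ≤ φ v)
    (hunit : φ ⟨WithLp.toLp 2 (fun _ => (1 : ℝ)), hu⟩ = 1)
    (h : ℕ → M) (hcauchy : CauchySeq (fun i => (h i : EuclideanSpace ℝ (Fin n)))) :
    CauchySeq (fun i => φ (h i)) := by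
  have hlip : LipschitzWith 1 φ := by
    simpa using AddMonoidHomClass.lipschitz_of_bound φ 1 fun v => by
      simpa using abs_apply_le_norm hpos hunit v
  have hcauchyM : CauchySeq h :=
    isUniformEmbedding_subtype_val.isUniformInducing.cauchy_map_iff.1 hcauchy
  exact hlip.uniformContinuous.comp_cauchySeq hcauchyM

theorem stmt16 (n : ℕ) (hn : 1 ≤ n) (M : AddSubgroup (EuclideanSpace ℝ (Fin n)))
    (hdense : Dense (M : Set (EuclideanSpace ℝ (Fin n))))
    (hu : (WithLp.toLp 2 (fun _ => (1 : ℝ)) : EuclideanSpace ℝ (Fin n)) ∈ M)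
    (φ : M →+ ℝ)
    (hpos : ∀ v : M, (v : EuclideanSpace ℝ (Fin n)) ∈ Mplus n M → 0 ≤ φ v)
    (hunit : φ ⟨WithLp.toLp 2 (fun _ => (1 : ℝ)), hu⟩ = 1)
    (h : ℕ → M) (hcauchy : CauchySeq (fun i => (h i : EuclideanSpace ℝ (Fin n)))) :
    CauchySeq (fun i => φ (h i)) :=
  stmt16_general n M hu φ hpos hunit h hcauchy
end
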